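/- arXiv:1711.06939 — 2 statements merged into one kernel-verified Lean document; each statement's English description precedes it below -/
import Mathlib

section
/- Fix q, t ∈ ℝ with |q| < 1 and |t| < 1. If θ: Λ → ℝ is a (q,t)-Macdonald-positive specialization and θ(Q_μ) = 0 for some partition μ, then θ(Q_λ) = 0 for every partition λ with μ ⊂ λ. -/
open scoped BigOperators
open Filter

noncomputable section

/-- A partition: a weakly decreasing, finitely supported function `ℕ → ℕ`
(rows indexed from `0`; `part i` is the length of row `i+1`). -/
structure Partn where
  toFun : ℕ →₀ ℕ
  antitone' : ∀ ⦃i j : ℕ⦄, i ≤ j → toFun j ≤ toFun i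

namespace Partn

/-- The `i`-th part (0-indexed). -/
def part (μ : Partn) (i : ℕ) : ℕ := μ.toFun i

/-- The size `|μ|`. -/
def size (μ : Partn) : ℕ := μ.toFun.sum fun _ v => v

/-- The conjugate partition value `μ'_{j+1} = #{i : μ.part i > j}` (0-indexed column `j`). -/
def conj (μ : Partn) (j : ℕ) : ℕ :=
  (μ.toFun.support.filter fun i => j < μ.toFun i).card

/-- Containment of Young diagrams. -/
def Sub (μ ν : Partn) : Prop := ∀ i, μ.part i ≤ ν.part i

/-- Cells (boxes) of the Young diagram, 0-indexed: `(i, j)` with `j < μ.part i`. -/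
def cells (μ : Partn) : Set (ℕ × ℕ) := {s | s.2 < μ.part s.1}

/-- The empty partition. -/
protected def empty : Partn := ⟨0, fun _ _ _ => le_rfl⟩

/-- The one-column partition `(1^r)`. -/
def col (r : ℕ) : Partn :=
  ⟨Finsupp.onFinset (Finset.range r) (fun i => if i < r then 1 else 0)
      (by intro i h; simp only [Finset.mem_range]; by_contra hc; simp [hc] at h),
   by
     intro i j hij
     simp only [Finsupp.onFinset_apply]
     split <;> split <;> omega⟩

/-- The partition obtained by prepending a first row of length `N` (at least `λ₁`). -/
def prepend (N : ℕ) (μ : Partn) : Partn :=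
  ⟨Finsupp.onFinset (insert 0 (μ.toFun.support.image (· + 1)))
      (fun i => match i with
        | 0 => max N (μ.part 0)
        | k + 1 => μ.part k)
      (by
        intro i h
        match i with
        | 0 => simp
        | k + 1 =>
          simp only [Finset.mem_insert, Finset.mem_image]
          right
          exact ⟨k, Finsupp.mem_support_iff.2 h, rfl⟩),
   by
     intro i j hij
     simp only [Finsupp.onFinset_apply]
     match i, j with
     | 0, 0 => exact le_rfl
     | 0, k + 1 => exact le_trans (μ.antitone' (Nat.zero_le k)) (le_max_right _ _)
     | a + 1, b + 1 => exact μ.antitone' (by omega)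
     | a + 1, 0 => omega⟩

/-- The partition `⌈λ/2⌉` with `⌈λ/2⌉'_j = ⌈λ'_j/2⌉`; its rows are `μ_i = λ_{2i-1}`. -/
def halfUp (μ : Partn) : Partn :=
  ⟨Finsupp.onFinset μ.toFun.support (fun i => μ.part (2 * i))
      (by
        intro i h
        apply Finsupp.mem_support_iff.2
        intro h0
        exact h (Nat.le_zero.mp (h0 ▸ μ.antitone' (by omega : i ≤ 2 * i)))),
   fun i j hij => μ.antitone' (by omega)⟩

/-- Number of nonzero parts. -/
def length (μ : Partn) : ℕ := μ.toFun.support.card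

end Partn

/-- The quantity `b_λ(s)` attached to a box `s` (equal to `1` outside the diagram);
here boxes are 0-indexed. -/
def bbox (q t : ℝ) (μ : Partn) (s : ℕ × ℕ) : ℝ :=
  if s.2 < μ.part s.1 then
    (1 - q ^ (μ.part s.1 - s.2 - 1) * t ^ (μ.conj s.2 - s.1)) /
      (1 - q ^ (μ.part s.1 - s.2) * t ^ (μ.conj s.2 - s.1 - 1))
  else 1

/-- `b_λ := ∏_{s ∈ λ} b_λ(s)`. -/
def bConst (q t : ℝ) (μ : Partn) : ℝ := ∏ᶠ s ∈ μ.cells, bbox q t μ s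

/-- `R_{ν/μ}`: boxes of `ν` in rows containing a box of `ν ∖ μ`. -/
def RSet (ν μ : Partn) : Set (ℕ × ℕ) :=
  {s | s.2 < ν.part s.1 ∧ μ.part s.1 < ν.part s.1}

/-- `C_{ν/μ}`: boxes of `ν` in columns containing a box of `ν ∖ μ`. -/
def CSet (ν μ : Partn) : Set (ℕ × ℕ) :=
  {s | s.2 < ν.part s.1 ∧ μ.conj s.2 < ν.conj s.2}

/-- `μ ≺_h ν` : `ν/μ` is a horizontal strip. -/
def HStrip (μ ν : Partn) : Prop := Partn.Sub μ ν ∧ ∀ j, ν.conj j ≤ μ.conj j + 1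

/-- `μ ≺_v ν` : `ν/μ` is a vertical strip. -/
def VStrip (μ ν : Partn) : Prop := Partn.Sub μ ν ∧ ∀ i, ν.part i ≤ μ.part i + 1

/-- `ψ_{ν/μ} = ∏_{s ∈ R∖C} b_μ(s)/b_ν(s)`. -/
def psiCoeff (q t : ℝ) (ν μ : Partn) : ℝ :=
  ∏ᶠ s ∈ RSet ν μ \ CSet ν μ, bbox q t μ s / bbox q t ν s

/-- `φ'_{ν/μ} = ∏_{s ∈ R} b_μ(s)/b_ν(s)`. -/
def phiPrimeCoeff (q t : ℝ) (ν μ : Partn) : ℝ :=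
  ∏ᶠ s ∈ RSet ν μ, bbox q t μ s / bbox q t ν s

/-- A semistandard tableau of shape `sh`: a chain `∅ = T₀ ≺_h T₁ ≺_h ⋯` with union `sh`. -/
structure Tableau (sh : Partn) where
  seq : ℕ → Partn
  seq_zero : seq 0 = Partn.empty
  strip : ∀ i, HStrip (seq i) (seq (i + 1))
  le_shape : ∀ i, Partn.Sub (seq i) sh
  exhaustive : ∀ i j, j < sh.part i → ∃ n, j < (seq n).part i

/-- The content `c_{i+1} = |T_{i+1}| - |T_i|` of a tableau. -/
def Tableau.content {sh : Partn} (T : Tableau sh) (i : ℕ) : ℕ :=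
  (T.seq (i + 1)).size - (T.seq i).size

/-- `ψ(T) = ∏_{i ≥ 1} ψ_{T_i/T_{i-1}}`. -/
def Tableau.psiWt (q t : ℝ) {sh : Partn} (T : Tableau sh) : ℝ :=
  ∏ᶠ i : ℕ, psiCoeff q t (T.seq (i + 1)) (T.seq i)

/-- `c(ν,μ) = ∑_{T} ψ(T)`, the sum over semistandard tableaux of shape `ν` and content `μ`. -/
def cCoeff (q t : ℝ) (ν μ : Partn) : ℝ :=
  ∑ᶠ T ∈ {T : Tableau ν | ∀ i, T.content i = μ.part i}, Tableau.psiWt q t T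

/-- A standard tableau: content `(1, 1, …, 1, 0, 0, …)`. -/
def IsStandard {sh : Partn} (T : Tableau sh) : Prop :=
  ∀ i, T.content i = if i < sh.size then 1 else 0

/-- The algebra of symmetric functions `Λ = ℝ[g₁, g₂, …]`. -/
abbrev Lam : Type := MvPolynomial ℕ ℝ

/-- The free generators: `gg 0 = 1` and `gg n = g_n` for `n ≥ 1`. -/
def gg (n : ℕ) : Lam := if n = 0 then 1 else MvPolynomial.X (n - 1)

/-- `g_μ = ∏_{i ≥ 1} g_{μ_i}`. -/
def gMono (μ : Partn) : Lam := ∏ᶠ i : ℕ, gg (μ.part i)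

/-- `Q` satisfies the defining relations `g_μ = ∑_ν c(ν,μ) Q_ν` of the Macdonald functions. -/
def QRel (q t : ℝ) (Q : Partn → Lam) : Prop :=
  ∀ μ : Partn, gMono μ = ∑ᶠ ν : Partn, cCoeff q t ν μ • Q ν

/-- The elementary symmetric functions `e_r := Q_{(1^r)}/b_{(1^r)}`, `e_0 := 1`. -/
def eQ (q t : ℝ) (Q : Partn → Lam) (r : ℕ) : Lam :=
  if r = 0 then 1 else (bConst q t (Partn.col r))⁻¹ • Q (Partn.col r)

/-- The defining recurrence for the Macdonald power sums, equivalent to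
`∑ g_n z^n = exp(∑ (1/n)((1-tⁿ)/(1-qⁿ)) p_n zⁿ)`. -/
def PRel (q t : ℝ) (p : ℕ → Lam) : Prop :=
  ∀ n : ℕ, 1 ≤ n → (n : ℝ) • gg n =
    ∑ k ∈ Finset.Icc 1 n, ((1 - t ^ k) / (1 - q ^ k)) • (p k * gg (n - k))

/-- The defining recurrence for the power sums in terms of the complete homogeneous
generators, equivalent to `∑ h_n z^n = exp(∑ p_n zⁿ/n)`. -/
def PRelSchur (p : ℕ → Lam) : Prop :=
  ∀ n : ℕ, 1 ≤ n → (n : ℝ) • gg n = ∑ k ∈ Finset.Icc 1 n, p k * gg (n - k)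

/-- `h_k` for an integer index: `0` for `k < 0`, `1` for `k = 0`. -/
def hInt (k : ℤ) : Lam := if k < 0 then 0 else if k = 0 then 1 else MvPolynomial.X (k.toNat - 1)

/-- The Schur function via the Jacobi–Trudi determinant. -/
def schur (μ : Partn) : Lam :=
  Matrix.det (Matrix.of fun i j : Fin μ.length => hInt ((μ.part i : ℤ) - (i : ℤ) + (j : ℤ)))

/-- `lim_{r→∞} τ(f_r)^{1/r} = 0`. -/
def RootDecay (τ : Lam →ₐ[ℝ] ℝ) (f : ℕ → Lam) : Prop :=
  Filter.Tendsto (fun r : ℕ => Real.rpow (τ (f r)) (1 / (r : ℝ))) Filter.atTop (nhds 0)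

/-- Complete homogeneous value `h_s(α) = ∑_{i₁ ≤ ⋯ ≤ i_s} α_{i₁}⋯α_{i_s}`. -/
def hSym (α : ℕ → ℝ) (s : ℕ) : ℝ :=
  ∑' f : {f : Fin s → ℕ // Monotone f}, ∏ k, α (f.1 k)

/-- Elementary value `e_r(β) = ∑_{j₁ < ⋯ < j_r} β_{j₁}⋯β_{j_r}`. -/
def eSym (β : ℕ → ℝ) (r : ℕ) : ℝ :=
  ∑' f : {f : Fin r → ℕ // StrictMono f}, ∏ k, β (f.1 k)

/-- Entries of the Toeplitz matrix: `a₀ = 1`, `a_m = 0` for `m < 0`. -/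
def toepEntry (a : ℕ → ℝ) (k : ℤ) : ℝ := if k < 0 then 0 else if k = 0 then 1 else a k.toNat

/-- Total positivity of the Toeplitz matrix `(a_{j-i})`. -/
def IsPolyaFrequencySeq (a : ℕ → ℝ) : Prop :=
  ∀ (n : ℕ) (i j : Fin n → ℕ), StrictMono i → StrictMono j →
    0 ≤ (Matrix.of fun k l : Fin n => toepEntry a ((j l : ℤ) - (i k : ℤ))).det

/-- The `q`-Pochhammer symbol `(x; q)_m`. -/
def qPoch (x q : ℝ) (m : ℕ) : ℝ := ∏ i ∈ Finset.range m, (1 - x * q ^ i)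

/-- The `n`-th coefficient of the formal power series `(xz; q)_∞ = ∏_{m ≥ 0} (1 - x q^m z)`. -/
def qInfCoeff (x q : ℝ) (n : ℕ) : ℝ :=
  (-1 : ℝ) ^ n * x ^ n * ∑' f : {f : Fin n → ℕ // StrictMono f}, ∏ k, q ^ (f.1 k)

/-- `G_s(α) = ∑_{(k_i) : ∑ k_i = s} ∏_i ((t;q)_{k_i}/(q;q)_{k_i}) α_i^{k_i}`. -/
def GFun (q t : ℝ) (α : ℕ → ℝ) (s : ℕ) : ℝ :=
  ∑' k : {k : ℕ →₀ ℕ // k.sum (fun _ m => m) = s},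
    ∏ᶠ i : ℕ, (qPoch t q (k.1 i) / qPoch q q (k.1 i)) * α i ^ (k.1 i)

/-- Taxicab distance between boxes. -/
def dist2 (s1 s2 : ℕ × ℕ) : ℕ :=
  ((s1.1 : ℤ) - (s2.1 : ℤ)).natAbs + ((s1.2 : ℤ) - (s2.2 : ℤ)).natAbs

/-- `μ ≺_{≤d} ν`: `μ ⊆ ν` and `ν∖μ` has two distinct boxes at distance `≤ d`. -/
def NearPair (d : ℕ) (μ ν : Partn) : Prop :=
  Partn.Sub μ ν ∧ ∃ s1 s2 : ℕ × ℕ, s1 ≠ s2 ∧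
    (s1 ∈ ν.cells ∧ s1 ∉ μ.cells) ∧ (s2 ∈ ν.cells ∧ s2 ∉ μ.cells) ∧ dist2 s1 s2 ≤ d

/-- Weakly increasing along rows and down columns (for fillings of `μ`). -/
def RowColWeak (μ : Partn) (F : ℕ × ℕ → ℕ) : Prop :=
  (∀ i j : ℕ, (i, j + 1) ∈ μ.cells → F (i, j) ≤ F (i, j + 1)) ∧
  (∀ i j : ℕ, (i + 1, j) ∈ μ.cells → F (i, j) ≤ F (i + 1, j))

/-- Strictly increasing along rows and down columns (for fillings of `μ`). -/
def RowColStrict (μ : Partn) (F : ℕ × ℕ → ℕ) : Prop :=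
  (∀ i j : ℕ, (i, j + 1) ∈ μ.cells → F (i, j) < F (i, j + 1)) ∧
  (∀ i j : ℕ, (i + 1, j) ∈ μ.cells → F (i, j) < F (i + 1, j))

/-- `SD_d(λ)` (for `|λ| = 2n`): fillings with `1,…,n`, weakly increasing along rows and
columns, each value appearing in exactly two boxes, at distance `≤ d` from each other. -/
def SDset (d : ℕ) (μ : Partn) : Set (ℕ × ℕ → ℕ) :=
  {F | (∀ s, s ∉ μ.cells → F s = 0) ∧ RowColWeak μ F ∧
       (∀ m : ℕ, 1 ≤ m → m ≤ μ.size / 2 → ({s ∈ μ.cells | F s = m}).ncard = 2) ∧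
       (∀ s ∈ μ.cells, 1 ≤ F s ∧ F s ≤ μ.size / 2) ∧
       (∀ s1 ∈ μ.cells, ∀ s2 ∈ μ.cells, F s1 = F s2 → dist2 s1 s2 ≤ d)}

/-- `ST(μ)` as fillings: standard tableaux of shape `μ`. -/
def STset (μ : Partn) : Set (ℕ × ℕ → ℕ) :=
  {F | (∀ s, s ∉ μ.cells → F s = 0) ∧ RowColStrict μ F ∧
       (∀ m : ℕ, 1 ≤ m → m ≤ μ.size → ({s ∈ μ.cells | F s = m}).ncard = 1) ∧
       (∀ s ∈ μ.cells, 1 ≤ F s ∧ F s ≤ μ.size)}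

/-- The set of normalized non-negative harmonic functions on the `(q,t)` Young graph. -/
def Hset (q t : ℝ) : Set (Partn → ℝ) :=
  {f | (∀ μ, 0 ≤ f μ) ∧ f Partn.empty = 1 ∧
       ∀ μ : Partn, f μ =
         ∑ᶠ ν ∈ {ν : Partn | Partn.Sub μ ν ∧ ν.size = μ.size + 1},
           psiCoeff q t ν μ * f ν}

end
noncomputable section Aux

namespace Partn

theorem toFun_injective : Function.Injective Partn.toFun := by
  rintro ⟨f, hf⟩ ⟨g, hg⟩ rfl; rfl

theorem pext {μ ν : Partn} (h : ∀ i, μ.part i = ν.part i) : μ = ν :=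
  toFun_injective (Finsupp.ext h)

theorem size_eq_sum {μ : Partn} {L : ℕ} (h : ∀ i, μ.part i ≠ 0 → i < L) :
    μ.size = ∑ i ∈ Finset.range L, μ.part i := by
  unfold size
  rw [Finsupp.sum_of_support_subset _ (fun i hi => Finset.mem_range.2
    (h i (Finsupp.mem_support_iff.1 hi))) _ (fun i _ => rfl)]
  rfl

theorem part_ne_zero_lt_size {μ : Partn} {i : ℕ} (h : μ.part i ≠ 0) : i < μ.size := by
  have h1 : ∀ j, j ≤ i → 1 ≤ μ.part j := fun j hj =>
    Nat.one_le_iff_ne_zero.2 (fun h0 => h (Nat.le_zero.1 (h0 ▸ μ.antitone' hj)))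
  have hsub : Finset.range (i + 1) ⊆ μ.toFun.support := by
    intro j hj
    rw [Finset.mem_range] at hj
    exact Finsupp.mem_support_iff.2
      (Nat.one_le_iff_ne_zero.1 (h1 j (by omega)))
  have : ∑ j ∈ Finset.range (i + 1), μ.part j ≤ ∑ j ∈ μ.toFun.support, μ.part j :=
    Finset.sum_le_sum_of_subset hsub
  have h2 : μ.size = ∑ j ∈ μ.toFun.support, μ.part j := rfl
  have h3 : i + 1 ≤ ∑ j ∈ Finset.range (i + 1), μ.part j := by
    calc i + 1 = ∑ _j ∈ Finset.range (i + 1), 1 := by simp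
    _ ≤ _ := Finset.sum_le_sum (fun j hj => h1 j (by have := Finset.mem_range.1 hj; omega))
  omega

/-- support bound via size -/
theorem part_eq_zero_of_size_le {μ : Partn} {i : ℕ} (h : μ.size ≤ i) : μ.part i = 0 := by
  by_contra hc
  exact absurd (part_ne_zero_lt_size hc) (by omega)

theorem size_le_of_sub {μ ν : Partn} (h : Sub μ ν) : μ.size ≤ ν.size := by
  calc μ.size = ∑ i ∈ Finset.range (μ.size + ν.size), μ.part i :=
        size_eq_sum (fun i hi => by have := part_ne_zero_lt_size hi; omega)
  _ ≤ ∑ i ∈ Finset.range (μ.size + ν.size), ν.part i :=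
        Finset.sum_le_sum (fun i _ => h i)
  _ = ν.size := (size_eq_sum (fun i hi => by have := part_ne_zero_lt_size hi; omega)).symm

theorem eq_of_sub_of_size_eq {μ ν : Partn} (h : Sub μ ν) (hs : μ.size = ν.size) : μ = ν := by
  apply pext
  have hL : ∀ i, i ∈ Finset.range (μ.size + ν.size + 1) → μ.part i ≤ ν.part i := fun i _ => h i
  have h1 : μ.size = ∑ i ∈ Finset.range (μ.size + ν.size + 1), μ.part i :=
    size_eq_sum (fun i hi => by have := part_ne_zero_lt_size hi; omega)
  have h2 : ν.size = ∑ i ∈ Finset.range (μ.size + ν.size + 1), ν.part i :=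
    size_eq_sum (fun i hi => by have := part_ne_zero_lt_size hi; omega)
  have := (Finset.sum_eq_sum_iff_of_le hL).1 (by omega)
  intro i
  by_cases hi : i < μ.size + ν.size + 1
  · exact this i (Finset.mem_range.2 hi)
  · rw [part_eq_zero_of_size_le (by omega), part_eq_zero_of_size_le (μ := ν) (by omega)]

theorem size_empty : Partn.empty.size = 0 := rfl

theorem part_empty (i : ℕ) : Partn.empty.part i = 0 := rfl

theorem sub_refl (μ : Partn) : Sub μ μ := fun _ => le_rfl

theorem sub_trans {a b c : Partn} (h1 : Sub a b) (h2 : Sub b c) : Sub a c :=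
  fun i => le_trans (h1 i) (h2 i)

/-- conj as a count over any covering range -/
theorem conj_eq_card {μ : Partn} {L : ℕ} (hL : ∀ i, μ.part i ≠ 0 → i < L) (j : ℕ) :
    μ.conj j = ((Finset.range L).filter fun i => j < μ.part i).card := by
  unfold conj
  congr 1
  apply Finset.ext
  intro i
  simp only [Finset.mem_filter, Finsupp.mem_support_iff, Finset.mem_range]
  constructor
  · rintro ⟨h1, h2⟩; exact ⟨hL i h1, h2⟩
  · rintro ⟨h1, h2⟩; exact ⟨by unfold part at h2; omega, h2⟩

theorem lt_conj_of_lt_part {μ : Partn} {i j : ℕ} (h : j < μ.part i) : i < μ.conj j := by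
  rw [conj_eq_card (L := μ.size) (fun k hk => part_ne_zero_lt_size hk)]
  have hsub : Finset.range (i + 1) ⊆ (Finset.range μ.size).filter fun k => j < μ.part k := by
    intro k hk
    rw [Finset.mem_range] at hk
    have h2 : μ.part i ≤ μ.part k := μ.antitone' (by omega)
    refine Finset.mem_filter.2 ⟨Finset.mem_range.2 (part_ne_zero_lt_size (by omega)), by omega⟩
  calc i < i + 1 := by omega
  _ = (Finset.range (i+1)).card := by simp
  _ ≤ _ := Finset.card_le_card hsub

theorem conj_le_of_support {μ : Partn} {k j : ℕ} (h : ∀ i, μ.part i ≠ 0 → i < k) :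
    μ.conj j ≤ k := by
  rw [conj_eq_card h]
  calc _ ≤ (Finset.range k).card := Finset.card_le_card (Finset.filter_subset _ _)
  _ = k := by simp

end Partn
end Aux
noncomputable section Aux2

theorem bbox_pos {q t : ℝ} (hq : |q| < 1) (ht : |t| < 1) (μ : Partn) (s : ℕ × ℕ) :
    0 < bbox q t μ s := by
  unfold bbox
  split
  case isFalse => exact one_pos
  case isTrue h =>
    have hconj : s.1 < μ.conj s.2 := Partn.lt_conj_of_lt_part h
    have key : ∀ (a b : ℕ), 1 ≤ a + b → 0 < 1 - q ^ a * t ^ b := by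
      intro a b hab
      have h1 : |q ^ a * t ^ b| < 1 := by
        rw [abs_mul, abs_pow, abs_pow]
        have hq' : |q| ^ a ≤ 1 := pow_le_one₀ (abs_nonneg q) hq.le
        have ht' : |t| ^ b ≤ 1 := pow_le_one₀ (abs_nonneg t) ht.le
        rcases Nat.one_le_iff_ne_zero.1 hab |> fun _ => (by omega : 1 ≤ a ∨ 1 ≤ b) with ha | hb
        · have : |q| ^ a < 1 := pow_lt_one₀ (abs_nonneg q) hq (by omega)
          nlinarith [pow_nonneg (abs_nonneg q) a, pow_nonneg (abs_nonneg t) b]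
        · have : |t| ^ b < 1 := pow_lt_one₀ (abs_nonneg t) ht (by omega)
          nlinarith [pow_nonneg (abs_nonneg q) a, pow_nonneg (abs_nonneg t) b]
      have := abs_lt.1 h1
      linarith [this.2]
    apply div_pos
    · exact key _ _ (by omega)
    · exact key _ _ (by omega)

theorem psiCoeff_pos {q t : ℝ} (hq : |q| < 1) (ht : |t| < 1) (ν μ : Partn) :
    0 < psiCoeff q t ν μ := by
  unfold psiCoeff
  rw [finprod_mem_def]
  apply finprod_induction (fun x => 0 < x) one_pos (fun x y hx hy => mul_pos hx hy)
  intro s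
  by_cases h : s ∈ RSet ν μ \ CSet ν μ
  · rw [Set.mulIndicator_of_mem h]
    exact div_pos (bbox_pos hq ht _ _) (bbox_pos hq ht _ _)
  · rw [Set.mulIndicator_of_notMem h]
    exact one_pos

end Aux2

noncomputable section Aux3

theorem psiWt_pos {q t : ℝ} (hq : |q| < 1) (ht : |t| < 1) {sh : Partn} (T : Tableau sh) :
    0 < T.psiWt q t := by
  unfold Tableau.psiWt
  exact finprod_induction (fun x => 0 < x) one_pos (fun x y hx hy => mul_pos hx hy)
    (fun i => psiCoeff_pos hq ht _ _)

theorem RSet_self (ν : Partn) : RSet ν ν = ∅ := by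
  ext s; simp [RSet]

theorem psiCoeff_self (q t : ℝ) (ν : Partn) : psiCoeff q t ν ν = 1 := by
  unfold psiCoeff
  rw [RSet_self]
  simp

theorem hstrip_refl (ν : Partn) : HStrip ν ν :=
  ⟨Partn.sub_refl ν, fun j => by omega⟩

/-- Partitions with toFun bounded by a fixed finsupp form a finite set. -/
theorem finite_sub_finsupp (g : ℕ →₀ ℕ) : {ρ : Partn | ρ.toFun ≤ g}.Finite := by
  have h1 : {ρ : Partn | ρ.toFun ≤ g} ⊆ Partn.toFun ⁻¹' (Set.Iic g) := fun ρ hρ => hρ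
  exact Set.Finite.preimage Partn.toFun_injective.injOn (Set.finite_Iic g)

/-- The finsupp that dominates all partitions of size `n`. -/
def capFun (n : ℕ) : ℕ →₀ ℕ :=
  Finsupp.onFinset (Finset.range n) (fun i => if i < n then n else 0)
    (by intro i h; simp only [Finset.mem_range]; by_contra hc; simp [hc] at h)

theorem toFun_le_capFun {ρ : Partn} {n : ℕ} (h : ρ.size ≤ n) : ρ.toFun ≤ capFun n := by
  intro i
  show ρ.part i ≤ capFun n i
  by_cases hi : i < n
  · simp only [capFun, Finsupp.onFinset_apply, if_pos hi]
    by_cases h0 : ρ.part i = 0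
    · omega
    · have h2 : ∑ j ∈ Finset.range (i+1), ρ.part j ≤ ρ.size := by
        rw [Partn.size_eq_sum (L := ρ.size + i + 1)
          (fun k hk => by have := Partn.part_ne_zero_lt_size hk; omega)]
        exact Finset.sum_le_sum_of_subset (by
          intro x hx; rw [Finset.mem_range] at *; omega)
      calc ρ.part i ≤ ∑ j ∈ Finset.range (i+1), ρ.part j :=
            Finset.single_le_sum (fun j _ => Nat.zero_le _) (by simp)
      _ ≤ n := le_trans h2 h
  · simp only [capFun, Finsupp.onFinset_apply, if_neg hi]
    by_cases h0 : ρ.part i = 0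
    · omega
    · have := Partn.part_ne_zero_lt_size h0; omega

theorem finite_partitions_size_le (n : ℕ) : {ρ : Partn | ρ.size ≤ n}.Finite :=
  (finite_sub_finsupp (capFun n)).subset (fun ρ hρ => toFun_le_capFun hρ)

theorem finite_partitions_size (n : ℕ) : {ρ : Partn | ρ.size = n}.Finite :=
  (finite_partitions_size_le n).subset (fun ρ hρ => le_of_eq hρ)

/-- Finset of partitions of size `n`. -/
def PFin (n : ℕ) : Finset Partn := (finite_partitions_size n).toFinset

theorem mem_PFin {n : ℕ} {ρ : Partn} : ρ ∈ PFin n ↔ ρ.size = n := by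
  simp [PFin, Set.Finite.mem_toFinset]

end Aux3
noncomputable section Aux4

/-- Semistandard tableaux of shape `ν` and content `κ`. -/
def Stab (ν κ : Partn) : Set (Tableau ν) := {T : Tableau ν | ∀ i, T.content i = κ.part i}

theorem Tableau.ext' {sh : Partn} {T T' : Tableau sh} (h : ∀ n, T.seq n = T'.seq n) :
    T = T' := by
  cases T; cases T'
  simp only [Tableau.mk.injEq]
  exact funext h

theorem Tableau.sub_seq {sh : Partn} (T : Tableau sh) {a b : ℕ} (h : a ≤ b) :
    Partn.Sub (T.seq a) (T.seq b) := by
  induction b with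
  | zero => cases Nat.le_zero.1 h; exact Partn.sub_refl _
  | succ n ih =>
    rcases Nat.lt_or_ge a (n+1) with h1 | h1
    · exact Partn.sub_trans (ih (by omega)) (T.strip n).1
    · have : a = n + 1 := by omega
      subst this; exact Partn.sub_refl _

theorem Tableau.size_seq_succ {sh : Partn} (T : Tableau sh) (i : ℕ) :
    (T.seq (i+1)).size = (T.seq i).size + T.content i := by
  have h := Partn.size_le_of_sub (T.strip i).1
  unfold Tableau.content
  omega

theorem Stab.size_seq {ν κ : Partn} {T : Tableau ν} (hT : T ∈ Stab ν κ) (k : ℕ) :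
    (T.seq k).size = ∑ i ∈ Finset.range k, κ.part i := by
  induction k with
  | zero => rw [T.seq_zero]; simp [Partn.size_empty]
  | succ n ih =>
    rw [Finset.sum_range_succ, ← ih, ← hT n, T.size_seq_succ n]

theorem Stab.seq_stab {ν κ : Partn} {T : Tableau ν} (hT : T ∈ Stab ν κ) {L k : ℕ}
    (hL : ∀ i, κ.part i ≠ 0 → i < L) (hk : L ≤ k) : T.seq k = T.seq L := by
  induction k with
  | zero => cases Nat.le_zero.1 hk; rfl
  | succ n ih =>
    rcases Nat.lt_or_ge L (n+1) with h1 | h1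
    · have h2 : (T.seq (n+1)).size = (T.seq n).size := by
        have h3 := T.size_seq_succ n
        have h4 : κ.part n = 0 := by
          by_contra hc; have := hL n hc; omega
        rw [hT n, h4] at h3; omega
      have heq : T.seq n = T.seq (n+1) :=
        Partn.eq_of_sub_of_size_eq (T.sub_seq (by omega : n ≤ n+1)) h2.symm
      rw [← heq]
      exact ih (by omega)
    · have : L = n + 1 := by omega
      subst this; rfl

theorem Stab.seq_shape {ν κ : Partn} {T : Tableau ν} (hT : T ∈ Stab ν κ) {L : ℕ}
    (hL : ∀ i, κ.part i ≠ 0 → i < L) : T.seq L = ν := by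
  apply Partn.pext
  intro i
  apply Nat.le_antisymm
  · exact T.le_shape L i
  · by_cases h0 : ν.part i = 0
    · omega
    · -- every cell of row i is covered at stage L
      have h1 : ν.part i - 1 < ν.part i := by omega
      obtain ⟨n, hn⟩ := T.exhaustive i (ν.part i - 1) h1
      have h2 : Partn.Sub (T.seq n) (T.seq (max n L)) := T.sub_seq (le_max_left _ _)
      have h3 : T.seq (max n L) = T.seq L := Stab.seq_stab hT hL (le_max_right _ _)
      have := h2 i
      rw [h3] at this
      unfold Partn.Sub at *
      omega

theorem Stab.size_shape {ν κ : Partn} {T : Tableau ν} (hT : T ∈ Stab ν κ) :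
    ν.size = κ.size := by
  have hL : ∀ i, κ.part i ≠ 0 → i < κ.size := fun i hi => Partn.part_ne_zero_lt_size hi
  calc ν.size = (T.seq κ.size).size := by rw [Stab.seq_shape hT hL]
  _ = ∑ i ∈ Finset.range κ.size, κ.part i := Stab.size_seq hT κ.size
  _ = κ.size := (Partn.size_eq_sum hL).symm

/-- Rows bound: the `k`-th partition in a tableau chain has at most `k` rows. -/
theorem Tableau.rows_bound {sh : Partn} (T : Tableau sh) (k : ℕ) :
    ∀ i, k ≤ i → (T.seq k).part i = 0 := by
  induction k with
  | zero => intro i _; rw [T.seq_zero]; rfl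
  | succ n ih =>
    intro i hi
    by_contra hc
    have h1 : i < (T.seq (n+1)).conj 0 := Partn.lt_conj_of_lt_part (by omega)
    have h2 : (T.seq (n+1)).conj 0 ≤ (T.seq n).conj 0 + 1 := (T.strip n).2 0
    have h3 : (T.seq n).conj 0 ≤ n := Partn.conj_le_of_support (fun i2 hi2 => by
      by_contra hc2; exact hi2 (ih i2 (by omega)))
    omega

theorem Stab.partial_sum_le {ν κ : Partn} {T : Tableau ν} (hT : T ∈ Stab ν κ) (k : ℕ) :
    ∑ i ∈ Finset.range k, κ.part i ≤ ∑ i ∈ Finset.range k, ν.part i := by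
  rw [← Stab.size_seq hT k, Partn.size_eq_sum (L := k)
    (fun i hi => by by_contra hc; exact hi (T.rows_bound k i (by omega)))]
  exact Finset.sum_le_sum (fun i _ => T.le_shape k i)

/-- Finiteness of the set of tableaux of given shape and content. -/
theorem Stab.finite (ν κ : Partn) : (Stab ν κ).Finite := by
  set L := κ.size with hLdef
  have hL : ∀ i, κ.part i ≠ 0 → i < L := fun i hi => Partn.part_ne_zero_lt_size hi
  set Φ : Tableau ν → (Fin (L+1) → (ℕ →₀ ℕ)) := fun T i => (T.seq i).toFun with hΦ
  have himage : Φ '' (Stab ν κ) ⊆ Set.univ.pi (fun _ : Fin (L+1) => Set.Iic ν.toFun) := by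
    rintro g ⟨T, hT, rfl⟩
    intro i _
    exact fun j => T.le_shape i j
  have hfin : (Set.univ.pi (fun _ : Fin (L+1) => Set.Iic ν.toFun)).Finite :=
    Set.Finite.pi (fun _ => Set.finite_Iic _)
  apply Set.Finite.of_finite_image (hfin.subset himage)
  intro T hT T' hT' heq
  apply Tableau.ext'
  intro n
  have key : ∀ m : ℕ, m ≤ L → T.seq m = T'.seq m := by
    intro m hm
    have := congrFun heq ⟨m, by omega⟩
    exact Partn.toFun_injective this
  rcases Nat.lt_or_ge n (L+1) with h1 | h1
  · exact key n (by omega)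
  · rw [Stab.seq_stab hT hL (by omega : L ≤ n), Stab.seq_stab hT' hL (by omega : L ≤ n)]
    exact key L le_rfl

theorem cCoeff_eq_sum (q t : ℝ) (ν κ : Partn) :
    cCoeff q t ν κ = ∑ T ∈ (Stab.finite ν κ).toFinset, T.psiWt q t := by
  unfold cCoeff
  exact finsum_mem_eq_finite_toFinset_sum _ (Stab.finite ν κ)

end Aux4
noncomputable section Aux5

theorem cCoeff_nonneg {q t : ℝ} (hq : |q| < 1) (ht : |t| < 1) (ν κ : Partn) :
    0 ≤ cCoeff q t ν κ := by
  rw [cCoeff_eq_sum]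
  exact Finset.sum_nonneg (fun T _ => (psiWt_pos hq ht T).le)

theorem exists_tableau_of_cCoeff_ne_zero {q t : ℝ} {ν κ : Partn}
    (h : cCoeff q t ν κ ≠ 0) : ∃ T : Tableau ν, T ∈ Stab ν κ := by
  rw [cCoeff_eq_sum] at h
  obtain ⟨T, hT, -⟩ := Finset.exists_ne_zero_of_sum_ne_zero h
  exact ⟨T, (Set.Finite.mem_toFinset _).1 hT⟩

theorem size_eq_of_cCoeff_ne_zero {q t : ℝ} {ν κ : Partn}
    (h : cCoeff q t ν κ ≠ 0) : ν.size = κ.size := by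
  obtain ⟨T, hT⟩ := exists_tableau_of_cCoeff_ne_zero h
  exact Stab.size_shape hT

theorem partial_sum_le_of_cCoeff_ne_zero {q t : ℝ} {ν κ : Partn}
    (h : cCoeff q t ν κ ≠ 0) (k : ℕ) :
    ∑ i ∈ Finset.range k, κ.part i ≤ ∑ i ∈ Finset.range k, ν.part i := by
  obtain ⟨T, hT⟩ := exists_tableau_of_cCoeff_ne_zero h
  exact Stab.partial_sum_le hT k

namespace Partn

/-- Truncation to the first `k` rows. -/
def trunc (κ : Partn) (k : ℕ) : Partn :=
  ⟨Finsupp.onFinset κ.toFun.support (fun i => if i < k then κ.toFun i else 0)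
    (by
      intro i h
      split at h
      · exact Finsupp.mem_support_iff.2 h
      · simp at h),
   by
     intro i j hij
     simp only [Finsupp.onFinset_apply]
     split <;> split
     · exact κ.antitone' hij
     · omega
     · exact Nat.zero_le _
     · omega⟩

theorem trunc_part (κ : Partn) (k i : ℕ) :
    (κ.trunc k).part i = if i < k then κ.part i else 0 := rfl

theorem trunc_size (κ : Partn) (k : ℕ) :
    (κ.trunc k).size = ∑ i ∈ Finset.range k, κ.part i := by
  have hL : ∀ i, (κ.trunc k).part i ≠ 0 → i < κ.size + k := by
    intro i hi
    rw [trunc_part] at hi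
    split at hi
    · have := part_ne_zero_lt_size hi; omega
    · omega
  rw [size_eq_sum hL]
  rw [show ∑ i ∈ Finset.range (κ.size + k), (κ.trunc k).part i
      = ∑ i ∈ Finset.range k, (κ.trunc k).part i from
    (Finset.sum_subset (by intro x hx; rw [Finset.mem_range] at *; omega)
      (fun x _ hx => by rw [trunc_part, if_neg (by rw [Finset.mem_range] at hx; omega)])).symm]
  exact Finset.sum_congr rfl (fun i hi => by
    rw [trunc_part, if_pos (Finset.mem_range.1 hi)])

theorem trunc_conj_le (κ : Partn) (k j : ℕ) :
    (κ.trunc (k+1)).conj j ≤ (κ.trunc k).conj j + 1 := by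
  have hb : ∀ m i, (κ.trunc m).part i ≠ 0 → i < κ.size := by
    intro m i hi
    rw [trunc_part] at hi
    split at hi
    · exact part_ne_zero_lt_size hi
    · omega
  rw [conj_eq_card (L := κ.size) (hb (k+1)), conj_eq_card (L := κ.size) (hb k)]
  have hsub : (Finset.range κ.size).filter (fun i => j < (κ.trunc (k+1)).part i)
      ⊆ insert k ((Finset.range κ.size).filter (fun i => j < (κ.trunc k).part i)) := by
    intro i hi
    rw [Finset.mem_filter] at hi
    obtain ⟨h1, h2⟩ := hi
    rw [trunc_part] at h2
    by_cases hik : i = k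
    · exact Finset.mem_insert.2 (Or.inl hik)
    · refine Finset.mem_insert.2 (Or.inr (Finset.mem_filter.2 ⟨h1, ?_⟩))
      rw [trunc_part]
      split at h2
      · rw [if_pos (by omega)]; exact h2
      · omega
  calc _ ≤ (insert k ((Finset.range κ.size).filter (fun i => j < (κ.trunc k).part i))).card :=
        Finset.card_le_card hsub
  _ ≤ _ := Finset.card_insert_le _ _

/-- The canonical (row-by-row) tableau of shape and content `κ`. -/
def canonical (κ : Partn) : Tableau κ where
  seq k := κ.trunc k
  seq_zero := pext (fun i => by rw [trunc_part]; rfl)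
  strip k := by
    constructor
    · intro i
      rw [trunc_part, trunc_part]
      split <;> split
      · exact le_rfl
      · omega
      · exact Nat.zero_le _
      · exact le_rfl
    · exact trunc_conj_le κ k
  le_shape k := by
    intro i
    rw [trunc_part]
    split
    · exact le_rfl
    · exact Nat.zero_le _
  exhaustive i j h := ⟨i + 1, by rw [trunc_part, if_pos (by omega)]; exact h⟩

theorem canonical_mem (κ : Partn) : κ.canonical ∈ Stab κ κ := by
  intro k
  unfold Tableau.content
  show (κ.trunc (k+1)).size - (κ.trunc k).size = κ.part k
  rw [trunc_size, trunc_size, Finset.sum_range_succ]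
  omega

end Partn

theorem cCoeff_self_pos {q t : ℝ} (hq : |q| < 1) (ht : |t| < 1) (κ : Partn) :
    0 < cCoeff q t κ κ := by
  rw [cCoeff_eq_sum]
  apply Finset.sum_pos (fun T _ => psiWt_pos hq ht T)
  exact ⟨κ.canonical, (Set.Finite.mem_toFinset _).2 (κ.canonical_mem)⟩

end Aux5
noncomputable section Aux6

namespace Partn

theorem part_ne_zero_iff_lt_length {μ : Partn} {i : ℕ} : μ.part i ≠ 0 ↔ i < μ.length := by
  constructor
  · intro h
    have hsub : Finset.range (i + 1) ⊆ μ.toFun.support := by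
      intro j hj
      rw [Finset.mem_range] at hj
      refine Finsupp.mem_support_iff.2 (fun h0 => h ?_)
      exact Nat.le_zero.1 (h0 ▸ μ.antitone' (by omega : j ≤ i))
    have := Finset.card_le_card hsub
    simp only [Finset.card_range] at this
    unfold length; omega
  · intro h
    by_contra hc
    have hsub : μ.toFun.support ⊆ Finset.range i := by
      intro j hj
      rw [Finset.mem_range]
      by_contra hc2
      have : μ.part j = 0 := Nat.le_zero.1 (hc ▸ μ.antitone' (by omega : i ≤ j))
      exact Finsupp.mem_support_iff.1 hj this
    have := Finset.card_le_card hsub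
    simp only [Finset.card_range] at this
    unfold length at h; omega

theorem part_length_eq_zero (μ : Partn) : μ.part μ.length = 0 := by
  by_contra h
  exact absurd (part_ne_zero_iff_lt_length.1 h) (by omega)

/-- Append a part equal to `1` at the end. -/
def appendOne (κ : Partn) : Partn :=
  ⟨κ.toFun + Finsupp.single κ.length 1, by
    intro i j hij
    simp only [Finsupp.add_apply, Finsupp.single_apply]
    by_cases hj : j < κ.length
    · have hi : i < κ.length := by omega
      rw [if_neg (by omega), if_neg (by omega)]
      simpa using κ.antitone' hij
    · by_cases hj2 : κ.length = j
      · rw [if_pos hj2]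
        have hj3 : κ.toFun j = 0 := by rw [← hj2]; exact part_length_eq_zero κ
        rw [hj3]
        by_cases hi : i < κ.length
        · rw [if_neg (by omega)]
          have : κ.part i ≠ 0 := part_ne_zero_iff_lt_length.2 hi
          unfold part at this; omega
        · have : i = κ.length := by omega
          rw [if_pos this.symm]
          have : κ.toFun i = 0 := by rw [this]; exact part_length_eq_zero κ
          omega
      · rw [if_neg hj2]
        have hj3 : κ.toFun j = 0 := by
          have : ¬ (κ.part j ≠ 0) := fun h => by
            have := part_ne_zero_iff_lt_length.1 h; omega
          unfold part at this; omega
        simp [hj3]⟩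

theorem appendOne_part_lt {κ : Partn} {i : ℕ} (h : i < κ.length) :
    κ.appendOne.part i = κ.part i := by
  show (κ.toFun + Finsupp.single κ.length 1 : ℕ →₀ ℕ) i = κ.toFun i
  rw [Finsupp.add_apply, Finsupp.single_apply, if_neg (by omega)]
  omega

theorem appendOne_part_len (κ : Partn) : κ.appendOne.part κ.length = 1 := by
  show (κ.toFun + Finsupp.single κ.length 1 : ℕ →₀ ℕ) κ.length = 1
  rw [Finsupp.add_apply, Finsupp.single_apply, if_pos rfl]
  have := part_length_eq_zero κ
  unfold part at this; omega

theorem appendOne_part_gt {κ : Partn} {i : ℕ} (h : κ.length < i) :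
    κ.appendOne.part i = 0 := by
  show (κ.toFun + Finsupp.single κ.length 1 : ℕ →₀ ℕ) i = 0
  rw [Finsupp.add_apply, Finsupp.single_apply, if_neg (by omega)]
  have : κ.part i = 0 := by
    by_contra hc
    have := part_ne_zero_iff_lt_length.1 hc; omega
  unfold part at this; omega

theorem appendOne_size (κ : Partn) : κ.appendOne.size = κ.size + 1 := by
  have h1 : κ.appendOne.size = ∑ i ∈ Finset.range (κ.length + 1), κ.appendOne.part i :=
    size_eq_sum (fun i hi => by
      by_contra hc
      exact hi (appendOne_part_gt (by omega)))
  have h2 : κ.size = ∑ i ∈ Finset.range κ.length, κ.part i :=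
    size_eq_sum (fun i hi => part_ne_zero_iff_lt_length.1 hi)
  rw [h1, Finset.sum_range_succ, appendOne_part_len,
    Finset.sum_congr rfl (fun i hi => appendOne_part_lt (Finset.mem_range.1 hi)), ← h2]

end Partn

/-- Adding a single box. -/
def AddBox (ρ lam : Partn) : Prop := Partn.Sub ρ lam ∧ lam.size = ρ.size + 1

theorem AddBox.conj_le {ρ lam : Partn} (h : AddBox ρ lam) (j : ℕ) :
    lam.conj j ≤ ρ.conj j + 1 := by
  obtain ⟨hsub, hsize⟩ := h
  set L := lam.size with hL
  have hbl : ∀ i, lam.part i ≠ 0 → i < L := fun i hi => Partn.part_ne_zero_lt_size hi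
  have hbr : ∀ i, ρ.part i ≠ 0 → i < L := fun i hi => by
    have : lam.part i ≠ 0 := by have := hsub i; omega
    exact hbl i this
  rw [Partn.conj_eq_card hbl j, Partn.conj_eq_card hbr j]
  set D := (Finset.range L).filter (fun i => ρ.part i < lam.part i) with hD
  have hcardD : D.card ≤ 1 := by
    have e1 : D.card = ∑ i ∈ Finset.range L, (if ρ.part i < lam.part i then 1 else 0) := by
      rw [hD, Finset.card_filter]
    have e2 : ∑ i ∈ Finset.range L, (ρ.part i + if ρ.part i < lam.part i then 1 else 0)
        ≤ ∑ i ∈ Finset.range L, lam.part i := by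
      apply Finset.sum_le_sum
      intro i _
      have := hsub i
      split <;> omega
    rw [Finset.sum_add_distrib] at e2
    have e3 : ρ.size = ∑ i ∈ Finset.range L, ρ.part i := Partn.size_eq_sum hbr
    have e4 : lam.size = ∑ i ∈ Finset.range L, lam.part i := Partn.size_eq_sum hbl
    omega
  have hsub2 : (Finset.range L).filter (fun i => j < lam.part i)
      ⊆ ((Finset.range L).filter (fun i => j < ρ.part i)) ∪ D := by
    intro i hi
    rw [Finset.mem_filter] at hi
    rw [Finset.mem_union, Finset.mem_filter, Finset.mem_filter]
    have := hsub i
    rcases Nat.lt_or_ge j (ρ.part i) with h1 | h1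
    · exact Or.inl ⟨hi.1, h1⟩
    · exact Or.inr ⟨hi.1, by omega⟩
  calc _ ≤ (((Finset.range L).filter (fun i => j < ρ.part i)) ∪ D).card :=
        Finset.card_le_card hsub2
  _ ≤ _ + D.card := Finset.card_union_le _ _
  _ ≤ _ := by omega

theorem AddBox.hstrip {ρ lam : Partn} (h : AddBox ρ lam) : HStrip ρ lam :=
  ⟨h.1, h.conj_le⟩

/-- One-box insertion between nested partitions. -/
theorem exists_addBox {μ ν : Partn} (hsub : Partn.Sub μ ν) (hlt : μ.size < ν.size) :
    ∃ lam : Partn, AddBox μ lam ∧ Partn.Sub lam ν := by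
  have hex : ∃ i, μ.part i < ν.part i := by
    by_contra hc
    push_neg at hc
    exact absurd (Partn.size_le_of_sub (fun i => hc i)) (by omega)
  classical
  set i0 := Nat.find hex with hi0
  have hmin : ∀ i, i < i0 → μ.part i = ν.part i := fun i hi =>
    Nat.le_antisymm (hsub i) (by have := Nat.find_min hex hi; omega)
  have hlt0 : μ.part i0 < ν.part i0 := Nat.find_spec hex
  refine ⟨⟨μ.toFun + Finsupp.single i0 1, ?_⟩, ⟨?_, ?_⟩, ?_⟩
  · intro i j hij
    simp only [Finsupp.add_apply, Finsupp.single_apply]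
    by_cases hj : i0 = j
    · subst hj
      rw [if_pos rfl]
      by_cases hii : i = i0
      · rw [if_pos hii.symm, hii]
      · rw [if_neg (by omega)]
        have h1 : μ.part i = ν.part i := hmin i (by omega)
        have h2 : ν.part i0 ≤ ν.part i := ν.antitone' hij
        show μ.toFun i0 + 1 ≤ μ.toFun i + 0
        unfold Partn.part at *
        omega
    · rw [if_neg hj]
      by_cases hii : i0 = i
      · subst hii
        rw [if_pos rfl]
        have h2 : μ.part j ≤ μ.part i0 := μ.antitone' hij
        show μ.toFun j + 0 ≤ μ.toFun i0 + 1
        unfold Partn.part at *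
        omega
      · rw [if_neg hii]
        simpa using μ.antitone' hij
  · intro i
    show μ.toFun i ≤ (μ.toFun + Finsupp.single i0 1 : ℕ →₀ ℕ) i
    simp only [Finsupp.add_apply]
    omega
  · -- size
    unfold Partn.size
    rw [Finsupp.sum_add_index' (fun _ => rfl) (fun _ _ _ => rfl),
      Finsupp.sum_single_index rfl]
  · intro i
    show (μ.toFun + Finsupp.single i0 1 : ℕ →₀ ℕ) i ≤ ν.toFun i
    simp only [Finsupp.add_apply, Finsupp.single_apply]
    by_cases hii : i0 = i
    · subst hii
      rw [if_pos rfl]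
      have := hlt0
      unfold Partn.part at this
      omega
    · rw [if_neg hii]
      have := hsub i
      unfold Partn.part at this
      omega

end Aux6
noncomputable section Aux7
open Classical in

theorem psiWt_eq_prod_range (q t : ℝ) {sh κc : Partn} {T : Tableau sh} (hT : T ∈ Stab sh κc)
    {L : ℕ} (hL : ∀ i, κc.part i ≠ 0 → i < L) :
    T.psiWt q t = ∏ i ∈ Finset.range L, psiCoeff q t (T.seq (i+1)) (T.seq i) := by
  unfold Tableau.psiWt
  apply finprod_eq_prod_of_mulSupport_subset
  intro i hi
  rw [Finset.coe_range, Set.mem_Iio]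
  by_contra hc
  push_neg at hc
  have h1 : T.seq (i+1) = T.seq L := Stab.seq_stab hT hL (by omega)
  have h2 : T.seq i = T.seq L := Stab.seq_stab hT hL (by omega)
  exact hi (by dsimp only; rw [h1, h2, psiCoeff_self])

section Glue

variable (κ : Partn) {ρ lam : Partn}

/-- Glue one extra box on top of a tableau of shape `ρ` and content `κ`. -/
def glueT (h : AddBox ρ lam) {T' : Tableau ρ} (hT' : T' ∈ Stab ρ κ) : Tableau lam where
  seq n := if n ≤ κ.length then T'.seq n else lam
  seq_zero := by rw [if_pos (Nat.zero_le _)]; exact T'.seq_zero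
  strip i := by
    rcases Nat.lt_or_ge (i+1) (κ.length + 1) with h1 | h1
    · rw [if_pos (by omega), if_pos (by omega)]
      exact T'.strip i
    · rcases Nat.lt_or_ge i (κ.length + 1) with h2 | h2
      · have hiL : i = κ.length := by omega
        rw [if_pos (by omega), if_neg (by omega), hiL]
        rw [Stab.seq_shape hT' (fun k hk => Partn.part_ne_zero_iff_lt_length.1 hk)]
        exact h.hstrip
      · rw [if_neg (by omega), if_neg (by omega)]
        exact hstrip_refl lam
  le_shape n := by
    split
    · exact Partn.sub_trans (T'.le_shape n) h.1
    · exact Partn.sub_refl lam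
  exhaustive i j hj := ⟨κ.length + 1, by rw [if_neg (by omega)]; exact hj⟩

theorem glueT_mem (h : AddBox ρ lam) {T' : Tableau ρ} (hT' : T' ∈ Stab ρ κ) :
    glueT κ h hT' ∈ Stab lam κ.appendOne := by
  intro i
  unfold Tableau.content
  have hLb : ∀ k, κ.part k ≠ 0 → k < κ.length := fun k hk =>
    Partn.part_ne_zero_iff_lt_length.1 hk
  rcases Nat.lt_or_ge i κ.length with h1 | h1
  · show ((glueT κ h hT').seq (i+1)).size - ((glueT κ h hT').seq i).size = _
    unfold glueT
    simp only
    rw [if_pos (by omega), if_pos (by omega), Partn.appendOne_part_lt h1]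
    exact hT' i
  · rcases Nat.eq_or_lt_of_le h1 with h2 | h2
    · show ((glueT κ h hT').seq (i+1)).size - ((glueT κ h hT').seq i).size = _
      unfold glueT
      simp only
      rw [if_neg (by omega), if_pos (by omega), ← h2, Partn.appendOne_part_len,
        Stab.seq_shape hT' hLb, h.2]
      omega
    · show ((glueT κ h hT').seq (i+1)).size - ((glueT κ h hT').seq i).size = _
      unfold glueT
      simp only
      rw [if_neg (by omega), if_neg (by omega), Partn.appendOne_part_gt h2]
      omega

theorem glueT_seq_len (h : AddBox ρ lam) {T' : Tableau ρ} (hT' : T' ∈ Stab ρ κ) :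
    (glueT κ h hT').seq κ.length = ρ := by
  show (if κ.length ≤ κ.length then T'.seq κ.length else lam) = ρ
  rw [if_pos le_rfl]
  exact Stab.seq_shape hT' (fun k hk => Partn.part_ne_zero_iff_lt_length.1 hk)

theorem glueT_psiWt (q t : ℝ) (h : AddBox ρ lam) {T' : Tableau ρ} (hT' : T' ∈ Stab ρ κ) :
    (glueT κ h hT').psiWt q t = T'.psiWt q t * psiCoeff q t lam ρ := by
  have hLb : ∀ k, κ.part k ≠ 0 → k < κ.length := fun k hk =>
    Partn.part_ne_zero_iff_lt_length.1 hk
  have hLb' : ∀ k, κ.appendOne.part k ≠ 0 → k < κ.length + 1 := by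
    intro k hk
    by_contra hc
    exact hk (Partn.appendOne_part_gt (by omega))
  rw [psiWt_eq_prod_range q t (glueT_mem κ h hT') hLb',
    psiWt_eq_prod_range q t hT' hLb, Finset.prod_range_succ]
  congr 1
  · apply Finset.prod_congr rfl
    intro i hi
    rw [Finset.mem_range] at hi
    show psiCoeff q t (if i+1 ≤ κ.length then T'.seq (i+1) else lam)
        (if i ≤ κ.length then T'.seq i else lam) = _
    rw [if_pos (by omega), if_pos (by omega)]
  · show psiCoeff q t (if κ.length+1 ≤ κ.length then T'.seq (κ.length+1) else lam)
        (if κ.length ≤ κ.length then T'.seq κ.length else lam) = _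
    rw [if_neg (by omega), if_pos le_rfl,
      Stab.seq_shape hT' hLb]

/-- Stop (restrict) a tableau at stage `L`. -/
def stopT {lam : Partn} (L : ℕ) (T : Tableau lam) (ρ : Partn) (hρ : T.seq L = ρ) :
    Tableau ρ where
  seq n := T.seq (min n L)
  seq_zero := by rw [Nat.min_comm, Nat.min_zero]; exact T.seq_zero
  strip i := by
    rcases Nat.lt_or_ge i L with h1 | h1
    · rw [min_eq_left (by omega), min_eq_left (by omega)]
      exact T.strip i
    · rw [min_eq_right (by omega), min_eq_right (by omega)]
      exact hstrip_refl _
  le_shape n := by rw [← hρ]; exact T.sub_seq (min_le_right n L)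
  exhaustive i j hj := ⟨L, by rw [min_self, hρ]; exact hj⟩

theorem stopT_mem {lam : Partn} {κ : Partn} {T : Tableau lam}
    (hT : T ∈ Stab lam κ.appendOne) {ρ : Partn} (hρ : T.seq κ.length = ρ) :
    stopT κ.length T ρ hρ ∈ Stab ρ κ := by
  intro i
  unfold Tableau.content
  show (T.seq (min (i+1) κ.length)).size - (T.seq (min i κ.length)).size = κ.part i
  rcases Nat.lt_or_ge i κ.length with h1 | h1
  · rw [min_eq_left (by omega), min_eq_left (by omega)]
    have := hT i
    unfold Tableau.content at this
    rw [this, Partn.appendOne_part_lt h1]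
  · rw [min_eq_right (by omega), min_eq_right (by omega), Nat.sub_self]
    have : κ.part i = 0 := by
      by_contra hc
      exact absurd (Partn.part_ne_zero_iff_lt_length.1 hc) (by omega)
    omega

end Glue

end Aux7
noncomputable section Aux8

open Classical in
theorem cCoeff_appendOne (q t : ℝ) (hq : |q| < 1) (ht : |t| < 1) (κ lam : Partn) :
    cCoeff q t lam κ.appendOne =
      ∑ ρ ∈ PFin κ.size, cCoeff q t ρ κ * (if AddBox ρ lam then psiCoeff q t lam ρ else 0) := by
  classical
  have hLb : ∀ k, κ.part k ≠ 0 → k < κ.length := fun k hk =>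
    Partn.part_ne_zero_iff_lt_length.1 hk
  have hLb' : ∀ k, κ.appendOne.part k ≠ 0 → k < κ.length + 1 := by
    intro k hk
    by_contra hc
    exact hk (Partn.appendOne_part_gt (by omega))
  by_cases hlam : lam.size = κ.size + 1
  · rw [cCoeff_eq_sum]
    have hmaps : ∀ T ∈ (Stab.finite lam κ.appendOne).toFinset,
        T.seq κ.length ∈ PFin κ.size := by
      intro T hT
      rw [Set.Finite.mem_toFinset] at hT
      rw [mem_PFin, Stab.size_seq hT κ.length]
      rw [Finset.sum_congr rfl (fun i hi => Partn.appendOne_part_lt (Finset.mem_range.1 hi))]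
      exact (Partn.size_eq_sum hLb).symm
    rw [← Finset.sum_fiberwise_of_maps_to hmaps]
    apply Finset.sum_congr rfl
    intro ρ hρ
    rw [mem_PFin] at hρ
    by_cases hAB : AddBox ρ lam
    · rw [if_pos hAB, cCoeff_eq_sum, Finset.sum_mul]
      symm
      apply Finset.sum_bij (i := fun T' hT' =>
        glueT κ hAB ((Set.Finite.mem_toFinset _).1 hT'))
      · intro T' hT'
        rw [Finset.mem_filter]
        refine ⟨(Set.Finite.mem_toFinset _).2 (glueT_mem κ hAB _), glueT_seq_len κ hAB _⟩
      · intro T1 h1 T2 h2 heq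
        apply Tableau.ext'
        intro n
        have hseq := congrArg Tableau.seq heq
        rcases Nat.lt_or_ge n (κ.length + 1) with hn | hn
        · have := congrFun hseq n
          show _ = _
          unfold glueT at this
          simp only [if_pos (by omega : n ≤ κ.length)] at this
          exact this
        · rw [Stab.seq_stab ((Set.Finite.mem_toFinset _).1 h1) hLb (by omega : κ.length ≤ n),
            Stab.seq_stab ((Set.Finite.mem_toFinset _).1 h2) hLb (by omega : κ.length ≤ n)]
          have := congrFun hseq κ.length
          unfold glueT at this
          simp only [if_pos le_rfl] at this
          exact this
      · intro T hT
        rw [Finset.mem_filter] at hT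
        obtain ⟨hT1, hT2⟩ := hT
        rw [Set.Finite.mem_toFinset] at hT1
        refine ⟨stopT κ.length T ρ hT2,
          (Set.Finite.mem_toFinset _).2 (stopT_mem hT1 hT2), ?_⟩
        apply Tableau.ext'
        intro n
        rcases Nat.lt_or_ge n (κ.length + 1) with hn | hn
        · show (if n ≤ κ.length then (stopT κ.length T ρ hT2).seq n else lam) = T.seq n
          rw [if_pos (by omega)]
          show T.seq (min n κ.length) = T.seq n
          rw [min_eq_left (by omega)]
        · show (if n ≤ κ.length then (stopT κ.length T ρ hT2).seq n else lam) = T.seq n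
          rw [if_neg (by omega)]
          rw [Stab.seq_stab hT1 hLb' (by omega : κ.length + 1 ≤ n)]
          exact (Stab.seq_shape hT1 hLb').symm
      · intro T' hT'
        rw [glueT_psiWt]
    · rw [if_neg hAB, mul_zero]
      apply Finset.sum_eq_zero
      intro T hT
      rw [Finset.mem_filter] at hT
      obtain ⟨hT1, hT2⟩ := hT
      rw [Set.Finite.mem_toFinset] at hT1
      exfalso
      apply hAB
      constructor
      · rw [← hT2]; exact T.le_shape κ.length
      · rw [hρ]; exact hlam
  · have h1 : cCoeff q t lam κ.appendOne = 0 := by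
      by_contra hc
      have := size_eq_of_cCoeff_ne_zero hc
      rw [Partn.appendOne_size] at this
      exact hlam this
    rw [h1]
    symm
    apply Finset.sum_eq_zero
    intro ρ hρ
    rw [mem_PFin] at hρ
    rw [if_neg (fun hAB : AddBox ρ lam => hlam (by rw [hAB.2, hρ])), mul_zero]

end Aux8
noncomputable section Aux9

theorem gMono_eq_prod (κ : Partn) {L : ℕ} (hL : ∀ i, κ.part i ≠ 0 → i < L) :
    gMono κ = ∏ i ∈ Finset.range L, gg (κ.part i) := by
  unfold gMono
  apply finprod_eq_prod_of_mulSupport_subset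
  intro i hi
  rw [Finset.coe_range, Set.mem_Iio]
  by_contra hc
  push_neg at hc
  have h0 : κ.part i = 0 := by
    by_contra h1; exact absurd (hL i h1) (by omega)
  apply hi
  dsimp only
  rw [h0]
  rfl

theorem gMono_appendOne (κ : Partn) : gMono κ.appendOne = gMono κ * gg 1 := by
  have hLb : ∀ k, κ.part k ≠ 0 → k < κ.length := fun k hk =>
    Partn.part_ne_zero_iff_lt_length.1 hk
  have hLb' : ∀ k, κ.appendOne.part k ≠ 0 → k < κ.length + 1 := by
    intro k hk
    by_contra hc
    exact hk (Partn.appendOne_part_gt (by omega))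
  rw [gMono_eq_prod κ.appendOne hLb', gMono_eq_prod κ hLb, Finset.prod_range_succ,
    Partn.appendOne_part_len]
  congr 1
  exact Finset.prod_congr rfl (fun i hi =>
    by rw [Partn.appendOne_part_lt (Finset.mem_range.1 hi)])

theorem theta_gMono {q t : ℝ} {Q : Partn → Lam} (hQ : QRel q t Q)
    (θ : Lam →ₐ[ℝ] ℝ) (κ : Partn) :
    θ (gMono κ) = ∑ ρ ∈ PFin κ.size, cCoeff q t ρ κ * θ (Q ρ) := by
  have h1 : gMono κ = ∑ ρ ∈ PFin κ.size, cCoeff q t ρ κ • Q ρ := by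
    rw [hQ κ]
    apply finsum_eq_sum_of_support_subset
    intro ν hν
    rw [Finset.mem_coe, mem_PFin]
    apply size_eq_of_cCoeff_ne_zero (q := q) (t := t)
    intro hc
    apply hν
    dsimp only
    rw [hc, zero_smul]
  rw [h1, map_sum]
  apply Finset.sum_congr rfl
  intro ρ _
  rw [map_smul, smul_eq_mul]

end Aux9
noncomputable section Aux10

theorem partial_le_size (κ : Partn) (k : ℕ) : ∑ i ∈ Finset.range k, κ.part i ≤ κ.size := by
  rw [Partn.size_eq_sum (L := k + κ.size)
    (fun i hi => by have := Partn.part_ne_zero_lt_size hi; omega)]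
  exact Finset.sum_le_sum_of_subset (by intro x hx; rw [Finset.mem_range] at *; omega)

theorem measure_lt {n : ℕ} {ρ κ : Partn} (hρ : ρ.size = n) (hκ : κ.size = n) (hne : ρ ≠ κ)
    (hdom : ∀ k, ∑ i ∈ Finset.range k, κ.part i ≤ ∑ i ∈ Finset.range k, ρ.part i) :
    ∑ k ∈ Finset.range (n+2), ∑ i ∈ Finset.range k, κ.part i
      < ∑ k ∈ Finset.range (n+2), ∑ i ∈ Finset.range k, ρ.part i := by
  have hex : ∃ i, ρ.part i ≠ κ.part i := by
    by_contra hc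
    push_neg at hc
    exact hne (Partn.pext hc)
  classical
  set i0 := Nat.find hex with hi0
  have hspec : ρ.part i0 ≠ κ.part i0 := Nat.find_spec hex
  have hmin : ∀ i, i < i0 → ρ.part i = κ.part i := fun i hi => by
    have := Nat.find_min hex hi; omega
  have hi0n : i0 < n := by
    by_contra hc
    push_neg at hc
    have h1 : ρ.part i0 = 0 := Partn.part_eq_zero_of_size_le (by omega)
    have h2 : κ.part i0 = 0 := Partn.part_eq_zero_of_size_le (by omega)
    omega
  have hpre : ∑ i ∈ Finset.range i0, κ.part i = ∑ i ∈ Finset.range i0, ρ.part i :=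
    Finset.sum_congr rfl (fun i hi => (hmin i (Finset.mem_range.1 hi)).symm)
  have hstrict : ∑ i ∈ Finset.range (i0+1), κ.part i < ∑ i ∈ Finset.range (i0+1), ρ.part i := by
    rw [Finset.sum_range_succ, Finset.sum_range_succ, hpre]
    have := hdom (i0 + 1)
    rw [Finset.sum_range_succ, Finset.sum_range_succ, hpre] at this
    omega
  exact Finset.sum_lt_sum (fun k _ => hdom k)
    ⟨i0 + 1, Finset.mem_range.2 (by omega), hstrict⟩

section Main

variable {q t : ℝ} {Q : Partn → Lam}

open Classical in
/-- `Y_ρ = ∑_{λ = ρ + box} ψ_{λ/ρ} θ(Q_λ)`. -/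
def Yf (q t : ℝ) (θ : Lam →ₐ[ℝ] ℝ) (Q : Partn → Lam) (n : ℕ) (ρ : Partn) : ℝ :=
  ∑ lam ∈ PFin (n+1), (if AddBox ρ lam then psiCoeff q t lam ρ else 0) * θ (Q lam)

theorem key_relation (hq : |q| < 1) (ht : |t| < 1) (hQ : QRel q t Q)
    (θ : Lam →ₐ[ℝ] ℝ) (κ : Partn) :
    ∑ ρ ∈ PFin κ.size, cCoeff q t ρ κ * Yf q t θ Q κ.size ρ
      = θ (gg 1) * ∑ ρ ∈ PFin κ.size, cCoeff q t ρ κ * θ (Q ρ) := by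
  classical
  have e1 : θ (gMono κ.appendOne)
      = ∑ lam ∈ PFin (κ.size + 1), cCoeff q t lam κ.appendOne * θ (Q lam) := by
    rw [theta_gMono hQ θ κ.appendOne, Partn.appendOne_size]
  have e2 : θ (gMono κ.appendOne) = θ (gg 1) * ∑ ρ ∈ PFin κ.size, cCoeff q t ρ κ * θ (Q ρ) := by
    rw [gMono_appendOne, map_mul, theta_gMono hQ θ κ, mul_comm]
  rw [← e2, e1]
  -- expand via the splitting identity and swap sums
  have e3 : ∀ lam ∈ PFin (κ.size + 1), cCoeff q t lam κ.appendOne * θ (Q lam)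
      = ∑ ρ ∈ PFin κ.size,
          cCoeff q t ρ κ * ((if AddBox ρ lam then psiCoeff q t lam ρ else 0) * θ (Q lam)) := by
    intro lam _
    rw [cCoeff_appendOne q t hq ht κ lam, Finset.sum_mul]
    exact Finset.sum_congr rfl (fun ρ _ => by ring)
  rw [Finset.sum_congr rfl e3, Finset.sum_comm]
  apply Finset.sum_congr rfl
  intro ρ _
  rw [Yf, Finset.mul_sum]

theorem pieri_theta (hq : |q| < 1) (ht : |t| < 1) (hQ : QRel q t Q)
    (θ : Lam →ₐ[ℝ] ℝ) (n : ℕ) :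
    ∀ ρ : Partn, ρ.size = n → Yf q t θ Q n ρ = θ (gg 1) * θ (Q ρ) := by
  classical
  set Z : Partn → ℝ := fun ρ => Yf q t θ Q n ρ - θ (gg 1) * θ (Q ρ) with hZ
  have hrel : ∀ κ : Partn, κ.size = n → ∑ ρ ∈ PFin n, cCoeff q t ρ κ * Z ρ = 0 := by
    intro κ hκ
    have := key_relation hq ht hQ θ κ
    rw [hκ] at this
    have expand : ∑ ρ ∈ PFin n, cCoeff q t ρ κ * Z ρ
        = ∑ ρ ∈ PFin n, cCoeff q t ρ κ * Yf q t θ Q n ρ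
          - ∑ ρ ∈ PFin n, cCoeff q t ρ κ * (θ (gg 1) * θ (Q ρ)) := by
      rw [← Finset.sum_sub_distrib]
      exact Finset.sum_congr rfl (fun ρ _ => by rw [hZ]; ring)
    rw [expand, this]
    have h4 : ∑ ρ ∈ PFin n, cCoeff q t ρ κ * (θ (gg 1) * θ (Q ρ))
        = θ (gg 1) * ∑ ρ ∈ PFin n, cCoeff q t ρ κ * θ (Q ρ) := by
      rw [Finset.mul_sum]
      exact Finset.sum_congr rfl (fun ρ _ => by ring)
    rw [h4]
    ring
  suffices h : ∀ (N : ℕ) (κ : Partn), κ.size = n →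
      (n+2) * n - (∑ k ∈ Finset.range (n+2), ∑ i ∈ Finset.range k, κ.part i) ≤ N →
      Z κ = 0 by
    intro ρ hρ
    have := h ((n+2) * n) ρ hρ (by omega)
    rw [hZ] at this
    dsimp only at this
    linarith [this]
  intro N
  induction N with
  | zero =>
    intro κ hκ hm
    have hsum := hrel κ hκ
    rw [Finset.sum_eq_single κ] at hsum
    · have hc := cCoeff_self_pos hq ht (q := q) (t := t) κ
      rcases mul_eq_zero.1 hsum with h | h
      · exact absurd h (by positivity)
      · exact h
    · intro ρ hρmem hρne
      rw [mem_PFin] at hρmem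
      by_cases hc : cCoeff q t ρ κ = 0
      · rw [hc, zero_mul]
      · exfalso
        have hlt := measure_lt hρmem hκ hρne (partial_sum_le_of_cCoeff_ne_zero hc)
        have hbd : ∑ k ∈ Finset.range (n+2), ∑ i ∈ Finset.range k, ρ.part i ≤ (n+2) * n := by
          calc _ ≤ ∑ _k ∈ Finset.range (n+2), n :=
                Finset.sum_le_sum (fun k _ => by
                  have := partial_le_size ρ k; omega)
          _ = (n+2) * n := by rw [Finset.sum_const, Finset.card_range]; ring
        omega
    · intro hmem
      exact absurd (mem_PFin.2 hκ) hmem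
  | succ N ih =>
    intro κ hκ hm
    have hsum := hrel κ hκ
    rw [Finset.sum_eq_single κ] at hsum
    · have hc := cCoeff_self_pos hq ht (q := q) (t := t) κ
      rcases mul_eq_zero.1 hsum with h | h
      · exact absurd h (by positivity)
      · exact h
    · intro ρ hρmem hρne
      rw [mem_PFin] at hρmem
      by_cases hc : cCoeff q t ρ κ = 0
      · rw [hc, zero_mul]
      · have hlt := measure_lt hρmem hκ hρne (partial_sum_le_of_cCoeff_ne_zero hc)
        have hbd : ∑ k ∈ Finset.range (n+2), ∑ i ∈ Finset.range k, ρ.part i ≤ (n+2) * n := by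
          calc _ ≤ ∑ _k ∈ Finset.range (n+2), n :=
                Finset.sum_le_sum (fun k _ => by
                  have := partial_le_size ρ k; omega)
          _ = (n+2) * n := by rw [Finset.sum_const, Finset.card_range]; ring
        rw [ih ρ hρmem (by omega), mul_zero]
    · intro hmem
      exact absurd (mem_PFin.2 hκ) hmem

end Main
end Aux10
noncomputable section Aux11

variable {q t : ℝ} {Q : Partn → Lam}

theorem zero_step (hq : |q| < 1) (ht : |t| < 1) (hQ : QRel q t Q)
    (θ : Lam →ₐ[ℝ] ℝ) (hpos : ∀ ν : Partn, 0 ≤ θ (Q ν))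
    {ρ lam : Partn} (hv : θ (Q ρ) = 0) (hAB : AddBox ρ lam) : θ (Q lam) = 0 := by
  classical
  have hY := pieri_theta hq ht hQ θ ρ.size ρ rfl
  rw [hv, mul_zero] at hY
  rw [Yf] at hY
  have hnn : ∀ lam' ∈ PFin (ρ.size + 1),
      0 ≤ (if AddBox ρ lam' then psiCoeff q t lam' ρ else 0) * θ (Q lam') := by
    intro lam' _
    apply mul_nonneg _ (hpos lam')
    split
    · exact (psiCoeff_pos hq ht _ _).le
    · exact le_rfl
  have hmem : lam ∈ PFin (ρ.size + 1) := mem_PFin.2 hAB.2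
  have := (Finset.sum_eq_zero_iff_of_nonneg hnn).1 hY lam hmem
  rw [if_pos hAB] at this
  rcases mul_eq_zero.1 this with h | h
  · exact absurd h (ne_of_gt (psiCoeff_pos hq ht _ _))
  · exact h

theorem zero_up (hq : |q| < 1) (ht : |t| < 1) (hQ : QRel q t Q)
    (θ : Lam →ₐ[ℝ] ℝ) (hpos : ∀ ν : Partn, 0 ≤ θ (Q ν)) :
    ∀ (d : ℕ) (μ ν : Partn), Partn.Sub μ ν → ν.size ≤ μ.size + d →
      θ (Q μ) = 0 → θ (Q ν) = 0 := by
  intro d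
  induction d with
  | zero =>
    intro μ ν hsub hsz h0
    have := Partn.size_le_of_sub hsub
    rw [← Partn.eq_of_sub_of_size_eq hsub (by omega)]
    exact h0
  | succ d ih =>
    intro μ ν hsub hsz h0
    have hle := Partn.size_le_of_sub hsub
    rcases Nat.eq_or_lt_of_le hle with heq | hlt
    · rw [← Partn.eq_of_sub_of_size_eq hsub heq]
      exact h0
    · obtain ⟨lam, hAB, hlsub⟩ := exists_addBox hsub hlt
      exact ih lam ν hlsub (by rw [hAB.2] at *; omega)
        (zero_step hq ht hQ θ hpos h0 hAB)

end Aux11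

/-- If `θ(Q_μ) = 0` for a Macdonald-positive specialization, then `θ(Q_λ) = 0` whenever
`μ ⊆ λ`. -/
theorem zero_propagates_up (q t : ℝ) (hq : |q| < 1) (ht : |t| < 1)
    (Q : Partn → Lam) (hQ : QRel q t Q)
    (θ : Lam →ₐ[ℝ] ℝ) (hpos : ∀ ν : Partn, 0 ≤ θ (Q ν))
    (μ : Partn) (h0 : θ (Q μ) = 0) :
    ∀ ν : Partn, Partn.Sub μ ν → θ (Q ν) = 0 := by
  intro ν hsub
  exact zero_up hq ht hQ θ hpos ν.size μ ν hsub (by omega) h0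
end

section
/- Fix q, t ∈ (−1, 1). There exists a constant C > 1 such that for every positive integer k: C^{−k} < ψ_{λ/μ} < C^{k} for all partitions μ ≺_h λ such that R_{λ/μ}∖C_{λ/μ} meets at most k rows, and C^{−k} < φ'_{λ/μ} < C^{k} for all partitions μ ≺_v λ such that R_{λ/μ} meets at most k rows. -/
open scoped BigOperators
open Filter

namespace PsiPhiAux

/-- term `1 - q^a t^b` -/
def Tm (q t : ℝ) (a b : ℕ) : ℝ := 1 - q ^ a * t ^ b

lemma Tm_mem {q t : ℝ} (hq : |q| < 1) (ht : |t| < 1) {a b : ℕ} (hab : 1 ≤ a + b) :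
    1 - max |q| |t| ≤ Tm q t a b ∧ Tm q t a b ≤ 1 + max |q| |t| := by
  have h1 : |q ^ a * t ^ b| ≤ max |q| |t| := by
    rw [abs_mul, abs_pow, abs_pow]
    rcases Nat.lt_or_ge 0 a with ha | ha
    · calc |q| ^ a * |t| ^ b ≤ |q| * 1 := by
            apply mul_le_mul (pow_le_of_le_one (abs_nonneg q) hq.le (by omega))
              (pow_le_one₀ (abs_nonneg t) ht.le) (pow_nonneg (abs_nonneg t) b) (abs_nonneg q)
        _ = |q| := mul_one _
        _ ≤ max |q| |t| := le_max_left _ _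
    · have hb : b ≠ 0 := by omega
      calc |q| ^ a * |t| ^ b ≤ 1 * |t| := by
            apply mul_le_mul (pow_le_one₀ (abs_nonneg q) hq.le)
              (pow_le_of_le_one (abs_nonneg t) ht.le hb) (pow_nonneg (abs_nonneg t) b)
              zero_le_one
        _ = |t| := one_mul _
        _ ≤ max |q| |t| := le_max_right _ _
  have h2 := abs_le.mp h1
  unfold Tm
  constructor <;> [linarith [h2.2]; linarith [h2.1]]

lemma X_le {q t : ℝ} (hq : |q| < 1) (ht : |t| < 1) {a e : ℕ} (h : e ≤ a) (b : ℕ) :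
    |q ^ a * t ^ b| ≤ |q| ^ e := by
  rw [abs_mul, abs_pow, abs_pow]
  calc |q| ^ a * |t| ^ b ≤ |q| ^ a * 1 :=
        mul_le_mul_of_nonneg_left (pow_le_one₀ (abs_nonneg t) ht.le) (pow_nonneg (abs_nonneg q) a)
    _ = |q| ^ a := mul_one _
    _ ≤ |q| ^ e := pow_le_pow_of_le_one (abs_nonneg q) hq.le h

lemma X_le_one {q t : ℝ} (hq : |q| < 1) (ht : |t| < 1) (a b : ℕ) :
    |q ^ a * t ^ b| ≤ 1 := by
  have := X_le hq ht (Nat.zero_le a) b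
  simpa using this

lemma gfact {q t : ℝ} (hq : |q| < 1) (ht : |t| < 1) {a1 b1 a2 b2 a3 b3 a4 b4 e : ℕ}
    (h1 : e ≤ a1) (h2 : e ≤ a2) (h3 : e ≤ a3) (h4 : e ≤ a4)
    (s1 : 1 ≤ a1 + b1) (s2 : 1 ≤ a2 + b2) (s3 : 1 ≤ a3 + b3) (s4 : 1 ≤ a4 + b4) :
    (1 - max |q| |t|) ^ 2 / (1 + max |q| |t|) ^ 2 ≤
        Tm q t a1 b1 * Tm q t a2 b2 / (Tm q t a3 b3 * Tm q t a4 b4) ∧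
      |Tm q t a1 b1 * Tm q t a2 b2 / (Tm q t a3 b3 * Tm q t a4 b4) - 1| ≤
        6 / (1 - max |q| |t|) ^ 2 * |q| ^ e := by
  set ρ := max |q| |t| with hρ
  have hρ0 : 0 ≤ ρ := le_trans (abs_nonneg q) (le_max_left _ _)
  have hρ1 : ρ < 1 := max_lt hq ht
  obtain ⟨l1, u1⟩ := Tm_mem hq ht s1
  obtain ⟨l2, u2⟩ := Tm_mem hq ht s2
  obtain ⟨l3, u3⟩ := Tm_mem hq ht s3
  obtain ⟨l4, u4⟩ := Tm_mem hq ht s4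
  have hρpos : (0:ℝ) < 1 - ρ := by linarith
  have hN : (1 - ρ) ^ 2 ≤ Tm q t a1 b1 * Tm q t a2 b2 := by nlinarith
  have hNu : Tm q t a1 b1 * Tm q t a2 b2 ≤ (1 + ρ) ^ 2 := by nlinarith
  have hD : (1 - ρ) ^ 2 ≤ Tm q t a3 b3 * Tm q t a4 b4 := by nlinarith
  have hDu : Tm q t a3 b3 * Tm q t a4 b4 ≤ (1 + ρ) ^ 2 := by nlinarith
  have hDpos : (0:ℝ) < Tm q t a3 b3 * Tm q t a4 b4 := lt_of_lt_of_le (by positivity) hD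
  constructor
  · exact div_le_div₀ (by nlinarith) hN hDpos hDu
  · have hE0 : (0:ℝ) ≤ |q| ^ e := pow_nonneg (abs_nonneg q) e
    have hdiff : |Tm q t a1 b1 * Tm q t a2 b2 - Tm q t a3 b3 * Tm q t a4 b4| ≤ 6 * |q| ^ e := by
      have e1 := abs_le.mp (X_le hq ht h1 b1)
      have e2 := abs_le.mp (X_le hq ht h2 b2)
      have e3 := abs_le.mp (X_le hq ht h3 b3)
      have e4 := abs_le.mp (X_le hq ht h4 b4)
      have o1 := abs_le.mp (X_le_one hq ht a1 b1)
      have o2 := abs_le.mp (X_le_one hq ht a2 b2)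
      have p12 : |q ^ a1 * t ^ b1 * (q ^ a2 * t ^ b2)| ≤ |q| ^ e := by
        rw [abs_mul]
        calc |q ^ a1 * t ^ b1| * |q ^ a2 * t ^ b2| ≤ |q| ^ e * 1 :=
              mul_le_mul (X_le hq ht h1 b1) (X_le_one hq ht a2 b2) (abs_nonneg _) hE0
          _ = |q| ^ e := mul_one _
      have p34 : |q ^ a3 * t ^ b3 * (q ^ a4 * t ^ b4)| ≤ |q| ^ e := by
        rw [abs_mul]
        calc |q ^ a3 * t ^ b3| * |q ^ a4 * t ^ b4| ≤ |q| ^ e * 1 :=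
              mul_le_mul (X_le hq ht h3 b3) (X_le_one hq ht a4 b4) (abs_nonneg _) hE0
          _ = |q| ^ e := mul_one _
      have hp12 := abs_le.mp p12
      have hp34 := abs_le.mp p34
      have hexp : Tm q t a1 b1 * Tm q t a2 b2 - Tm q t a3 b3 * Tm q t a4 b4 =
          q ^ a3 * t ^ b3 + q ^ a4 * t ^ b4 - q ^ a1 * t ^ b1 - q ^ a2 * t ^ b2 +
            q ^ a1 * t ^ b1 * (q ^ a2 * t ^ b2) - q ^ a3 * t ^ b3 * (q ^ a4 * t ^ b4) := by
        unfold Tm; ring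
      rw [hexp]
      rw [abs_le]
      constructor <;> linarith [e1.1, e1.2, e2.1, e2.2, e3.1, e3.2, e4.1, e4.2,
        hp12.1, hp12.2, hp34.1, hp34.2]
    have hdne : Tm q t a3 b3 * Tm q t a4 b4 ≠ 0 := ne_of_gt hDpos
    have : Tm q t a1 b1 * Tm q t a2 b2 / (Tm q t a3 b3 * Tm q t a4 b4) - 1 =
        (Tm q t a1 b1 * Tm q t a2 b2 - Tm q t a3 b3 * Tm q t a4 b4) /
          (Tm q t a3 b3 * Tm q t a4 b4) := by
      rw [div_sub_one hdne]
    rw [this, abs_div, abs_of_pos hDpos]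
    calc |Tm q t a1 b1 * Tm q t a2 b2 - Tm q t a3 b3 * Tm q t a4 b4| /
          (Tm q t a3 b3 * Tm q t a4 b4) ≤ 6 * |q| ^ e / (1 - ρ) ^ 2 :=
          div_le_div₀ (by positivity) hdiff (by positivity) hD
      _ = 6 / (1 - ρ) ^ 2 * |q| ^ e := by ring

lemma exp_bounds {x a δ c : ℝ} (hδ0 : 0 < δ) (hδ1 : δ ≤ 1) (hδx : δ ≤ x)
    (ha : |x - 1| ≤ a) (hc2 : 2 ≤ c) (hclog : 2 * Real.log δ⁻¹ ≤ c) :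
    Real.exp (-(c * a)) ≤ x ∧ x ≤ Real.exp a := by
  have ha0 : 0 ≤ a := le_trans (abs_nonneg _) ha
  have hab := abs_le.mp ha
  constructor
  · rcases le_or_gt a (1/2) with hhalf | hhalf
    · have h1 : Real.exp (-(c * a)) ≤ Real.exp (-(2 * a)) := by
        apply Real.exp_le_exp.mpr; nlinarith
      have h2 : Real.exp (-(2 * a)) ≤ 1 - a := by
        rw [Real.exp_neg]
        rw [inv_le_comm₀ (Real.exp_pos _) (by linarith)]
        calc (1 - a)⁻¹ ≤ 1 + 2 * a := by
              rw [inv_le_comm₀ (by linarith) (by linarith)]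
              rw [inv_eq_one_div, div_le_iff₀ (by linarith)]
              nlinarith
          _ ≤ Real.exp (2 * a) := by linarith [Real.add_one_le_exp (2 * a)]
      linarith
    · have h1 : Real.exp (-(c * a)) ≤ Real.exp (Real.log δ) := by
        apply Real.exp_le_exp.mpr
        have hl0 : 0 ≤ Real.log δ⁻¹ := Real.log_nonneg (by
          rw [le_inv_comm₀ one_pos hδ0]; simpa using hδ1)
        have hld : Real.log δ = -Real.log δ⁻¹ := by rw [Real.log_inv]; ring
        rw [hld]
        nlinarith
      rw [Real.exp_log hδ0] at h1
      linarith
  · calc x ≤ 1 + a := by linarith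
      _ ≤ Real.exp a := by linarith [Real.add_one_le_exp a]

lemma geom_bound {r : ℝ} (h0 : 0 ≤ r) (h1 : r < 1) (n : ℕ) :
    ∑ j ∈ Finset.range n, r ^ j ≤ (1 - r)⁻¹ := by
  rw [geom_sum_eq (by linarith : r ≠ 1)]
  have h2 : (r ^ n - 1) / (r - 1) = (1 - r ^ n) / (1 - r) := by
    rw [← neg_div_neg_eq]; ring_nf
  rw [h2, inv_eq_one_div]
  exact div_le_div₀ zero_le_one (by nlinarith [pow_nonneg h0 n]) (by linarith) le_rfl

end PsiPhiAux

namespace PsiPhiAux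

lemma conj_eq_filter (μ : Partn) (S : Finset ℕ) (hS : μ.toFun.support ⊆ S) (j : ℕ) :
    μ.conj j = (S.filter fun r => j < μ.toFun r).card := by
  unfold Partn.conj
  congr 1
  apply Finset.ext
  intro r
  simp only [Finset.mem_filter, Finsupp.mem_support_iff]
  constructor
  · rintro ⟨h1, h2⟩
    exact ⟨hS (Finsupp.mem_support_iff.2 h1), h2⟩
  · rintro ⟨_, h2⟩
    exact ⟨by omega, h2⟩

lemma lt_conj (μ : Partn) {i j : ℕ} (h : j < μ.part i) : i < μ.conj j := by
  have hsubs : Finset.range (i + 1) ⊆ μ.toFun.support.filter (fun r => j < μ.toFun r) := by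
    intro r hr
    rw [Finset.mem_range] at hr
    have hge : μ.toFun i ≤ μ.toFun r := μ.antitone' (by omega)
    have h' : j < μ.toFun i := h
    simp only [Finset.mem_filter, Finsupp.mem_support_iff]
    exact ⟨by omega, by omega⟩
  have := Finset.card_le_card hsubs
  rw [Finset.card_range] at this
  exact lt_of_lt_of_le (Nat.lt_succ_self i) this

lemma support_sub {μ ν : Partn} (h : Partn.Sub μ ν) : μ.toFun.support ⊆ ν.toFun.support := by
  intro r hr
  rw [Finsupp.mem_support_iff] at *
  have := h r
  unfold Partn.part at this
  omega

lemma conj_mono {μ ν : Partn} (h : Partn.Sub μ ν) (j : ℕ) : μ.conj j ≤ ν.conj j := by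
  rw [conj_eq_filter μ (μ.toFun.support ∪ ν.toFun.support) Finset.subset_union_left j,
    conj_eq_filter ν (μ.toFun.support ∪ ν.toFun.support) Finset.subset_union_right j]
  apply Finset.card_le_card
  intro r hr
  rw [Finset.mem_filter] at *
  refine ⟨hr.1, ?_⟩
  have := h r
  unfold Partn.part at this
  omega

lemma conj_lt {μ ν : Partn} (h : Partn.Sub μ ν) {i j : ℕ} (h1 : μ.part i ≤ j)
    (h2 : j < ν.part i) : μ.conj j < ν.conj j := by
  rw [conj_eq_filter μ ν.toFun.support (support_sub h) j]
  unfold Partn.conj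
  apply Finset.card_lt_card
  rw [Finset.ssubset_iff_of_subset]
  · refine ⟨i, ?_, ?_⟩
    · rw [Finset.mem_filter, Finsupp.mem_support_iff]
      have h2' : j < ν.toFun i := h2
      exact ⟨by omega, h2'⟩
    · rw [Finset.mem_filter]
      rintro ⟨_, hcon⟩
      have h1' : μ.toFun i ≤ j := h1
      omega
  · intro r hr
    rw [Finset.mem_filter] at *
    refine ⟨hr.1, ?_⟩
    have := h r
    unfold Partn.part at this
    omega

lemma RSet_finite (ν μ : Partn) : (RSet ν μ).Finite := by
  apply Set.Finite.subset (ν.toFun.support ×ˢ Finset.range (ν.part 0)).finite_toSet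
  rintro ⟨i, j⟩ ⟨h1, _⟩
  have h1' : j < ν.toFun i := h1
  simp only [Finset.coe_product, Set.mem_prod, Finset.mem_coe, Finsupp.mem_support_iff,
    Finset.mem_range]
  constructor
  · omega
  · have := ν.antitone' (Nat.zero_le i)
    unfold Partn.part
    omega

lemma box_est {q t : ℝ} (hq : |q| < 1) (ht : |t| < 1) {μ ν : Partn}
    (hsub : Partn.Sub μ ν) {i j : ℕ}
    (hjn : j < ν.part i) (hmn : μ.part i < ν.part i) (hjm : j ≤ μ.part i) :
    (1 - max |q| |t|) ^ 2 / (1 + max |q| |t|) ^ 2 ≤ bbox q t μ (i, j) / bbox q t ν (i, j) ∧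
      |bbox q t μ (i, j) / bbox q t ν (i, j) - 1| ≤
        6 / (1 - max |q| |t|) ^ 2 * |q| ^ (μ.part i - 1 - j) := by
  set ρ := max |q| |t| with hρdef
  have hρ1 : ρ < 1 := max_lt hq ht
  have hicν : i < ν.conj j := lt_conj ν hjn
  have hbν : bbox q t ν (i, j) =
      Tm q t (ν.part i - j - 1) (ν.conj j - i) / Tm q t (ν.part i - j) (ν.conj j - i - 1) := by
    unfold bbox Tm
    dsimp only
    rw [if_pos hjn]
  rcases Nat.lt_or_ge j (μ.part i) with hjlt | hjge
  · -- j < μ.part i : box inside μ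
    have hicμ : i < μ.conj j := lt_conj μ hjlt
    have hbμ : bbox q t μ (i, j) =
        Tm q t (μ.part i - j - 1) (μ.conj j - i) / Tm q t (μ.part i - j) (μ.conj j - i - 1) := by
      unfold bbox Tm
      dsimp only
      rw [if_pos hjlt]
    have key := gfact hq ht
      (a1 := μ.part i - j - 1) (b1 := μ.conj j - i)
      (a2 := ν.part i - j) (b2 := ν.conj j - i - 1)
      (a3 := μ.part i - j) (b3 := μ.conj j - i - 1)
      (a4 := ν.part i - j - 1) (b4 := ν.conj j - i)
      (e := μ.part i - 1 - j)
      (by omega) (by omega) (by omega) (by omega)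
      (by omega) (by omega) (by omega) (by omega)
    have heq : bbox q t μ (i, j) / bbox q t ν (i, j) =
        Tm q t (μ.part i - j - 1) (μ.conj j - i) * Tm q t (ν.part i - j) (ν.conj j - i - 1) /
          (Tm q t (μ.part i - j) (μ.conj j - i - 1) * Tm q t (ν.part i - j - 1) (ν.conj j - i)) := by
      rw [hbμ, hbν]
      have n1 : Tm q t (μ.part i - j) (μ.conj j - i - 1) ≠ 0 := by
        have := (Tm_mem hq ht (a := μ.part i - j) (b := μ.conj j - i - 1) (by omega)).1
        intro hz; rw [hz] at this; linarith
      have n2 : Tm q t (ν.part i - j) (ν.conj j - i - 1) ≠ 0 := by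
        have := (Tm_mem hq ht (a := ν.part i - j) (b := ν.conj j - i - 1) (by omega)).1
        intro hz; rw [hz] at this; linarith
      have n3 : Tm q t (ν.part i - j - 1) (ν.conj j - i) ≠ 0 := by
        have := (Tm_mem hq ht (a := ν.part i - j - 1) (b := ν.conj j - i) (by omega)).1
        intro hz; rw [hz] at this; linarith
      field_simp
      try ring
    rw [heq]
    exact key
  · -- j = μ.part i : box outside μ
    have hje : j = μ.part i := by omega
    have hbμ : bbox q t μ (i, j) = 1 := by
      unfold bbox
      dsimp only
      rw [if_neg (by omega)]
    have key := gfact hq ht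
      (a1 := ν.part i - j) (b1 := ν.conj j - i - 1)
      (a2 := 1) (b2 := 0)
      (a3 := ν.part i - j - 1) (b3 := ν.conj j - i)
      (a4 := 1) (b4 := 0)
      (e := μ.part i - 1 - j)
      (by omega) (by omega) (by omega) (by omega)
      (by omega) (by omega) (by omega) (by omega)
    have heq : bbox q t μ (i, j) / bbox q t ν (i, j) =
        Tm q t (ν.part i - j) (ν.conj j - i - 1) * Tm q t 1 0 /
          (Tm q t (ν.part i - j - 1) (ν.conj j - i) * Tm q t 1 0) := by
      rw [hbμ, hbν]
      have n2 : Tm q t (ν.part i - j) (ν.conj j - i - 1) ≠ 0 := by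
        have := (Tm_mem hq ht (a := ν.part i - j) (b := ν.conj j - i - 1) (by omega)).1
        intro hz; rw [hz] at this; linarith
      have n3 : Tm q t (ν.part i - j - 1) (ν.conj j - i) ≠ 0 := by
        have := (Tm_mem hq ht (a := ν.part i - j - 1) (b := ν.conj j - i) (by omega)).1
        intro hz; rw [hz] at this; linarith
      have n4 : Tm q t 1 0 ≠ 0 := by
        have := (Tm_mem hq ht (a := 1) (b := 0) (by omega)).1
        intro hz; rw [hz] at this; linarith
      field_simp
      try ring
    rw [heq]
    exact key

end PsiPhiAux


namespace PsiPhiAux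

/-- The global constant. -/
noncomputable def CC (q t : ℝ) : ℝ :=
  Real.exp (max 2 (2 * Real.log ((1 - max |q| |t|) ^ 2 / (1 + max |q| |t|) ^ 2)⁻¹) *
    (6 / (1 - max |q| |t|) ^ 2 * (1 + (1 - |q|)⁻¹))) + 1

lemma prod_rows_bound {q t : ℝ} (hq : |q| < 1) (ht : |t| < 1) {μ ν : Partn}
    (hsub : Partn.Sub μ ν) (S : Set (ℕ × ℕ)) (hfin : S.Finite) (k : ℕ) (hk : 1 ≤ k)
    (hbox : ∀ i j : ℕ, (i, j) ∈ S → j < ν.part i ∧ μ.part i < ν.part i ∧ j ≤ μ.part i)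
    (hrows : ({i : ℕ | ∃ j : ℕ, (i, j) ∈ S}).ncard ≤ k) :
    CC q t ^ (-(k : ℤ)) < (∏ᶠ s ∈ S, bbox q t μ s / bbox q t ν s) ∧
      (∏ᶠ s ∈ S, bbox q t μ s / bbox q t ν s) < CC q t ^ (k : ℤ) := by
  classical
  set ρ := max |q| |t| with hρdef
  have hρ0 : 0 ≤ ρ := le_trans (abs_nonneg q) (le_max_left _ _)
  have hρ1 : ρ < 1 := max_lt hq ht
  set δ := (1 - ρ) ^ 2 / (1 + ρ) ^ 2 with hδdef
  set K := 6 / (1 - ρ) ^ 2 with hKdef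
  set M := K * (1 + (1 - |q|)⁻¹) with hMdef
  set c := max 2 (2 * Real.log δ⁻¹) with hcdef
  have hδ0 : 0 < δ := div_pos (pow_pos (by linarith) 2) (pow_pos (by linarith) 2)
  have hδ1 : δ ≤ 1 := by
    rw [hδdef, div_le_one (by positivity)]
    nlinarith
  have hK0 : 0 ≤ K := by positivity
  have hM0 : 0 ≤ M := by
    have : (0:ℝ) ≤ (1 - |q|)⁻¹ := by
      have : (0:ℝ) < 1 - |q| := by linarith
      positivity
    rw [hMdef]; nlinarith
  have hc2 : (2:ℝ) ≤ c := le_max_left _ _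
  have hclog : 2 * Real.log δ⁻¹ ≤ c := le_max_right _ _
  have hcM0 : 0 ≤ c * M := by nlinarith
  have hexp1 : (1:ℝ) ≤ Real.exp (c * M) := by
    rw [← Real.exp_zero]
    exact Real.exp_le_exp.mpr hcM0
  have hCC : CC q t = Real.exp (c * M) + 1 := rfl
  have hCC1 : 1 < CC q t := by rw [hCC]; linarith
  have hCC0 : 0 < CC q t := by linarith
  set f : ℕ × ℕ → ℝ := fun s => bbox q t μ s / bbox q t ν s with hfdef
  set F := hfin.toFinset with hFdef
  have hSF : (∏ᶠ s ∈ S, f s) = ∏ s ∈ F, f s := by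
    rw [← hfin.coe_toFinset, finprod_mem_coe_finset]
  set rows := F.image Prod.fst with hrowsdef
  have hcard : rows.card ≤ k := by
    have hset : {i : ℕ | ∃ j : ℕ, (i, j) ∈ S} = ↑rows := by
      ext i
      simp only [Set.mem_setOf_eq, hrowsdef, Finset.coe_image, Set.mem_image,
        Finset.mem_coe, Set.Finite.mem_toFinset, hFdef]
      constructor
      · rintro ⟨j, hj⟩; exact ⟨(i, j), hj, rfl⟩
      · rintro ⟨⟨a, b⟩, hab, rfl⟩; exact ⟨b, hab⟩
    rw [hset, Set.ncard_coe_finset] at hrows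
    exact hrows
  have hfib : (∏ s ∈ F, f s) = ∏ i ∈ rows, ∏ s ∈ F.filter (fun s => s.1 = i), f s :=
    (Finset.prod_fiberwise_of_maps_to (fun x hx => Finset.mem_image_of_mem _ hx) f).symm
  -- per-row bounds
  have hrow : ∀ i ∈ rows,
      Real.exp (-(c * M)) ≤ (∏ s ∈ F.filter (fun s => s.1 = i), f s) ∧
        (∏ s ∈ F.filter (fun s => s.1 = i), f s) ≤ Real.exp (c * M) := by
    intro i _
    set G := F.filter (fun s => s.1 = i) with hGdef
    set A : ℕ × ℕ → ℝ := fun s => K * |q| ^ (μ.part i - 1 - s.2) with hAdef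
    have hmemG : ∀ s ∈ G, (i, s.2) ∈ S ∧ s.1 = i := by
      intro s hs
      rw [hGdef, Finset.mem_filter] at hs
      obtain ⟨hsF, hsi⟩ := hs
      rw [hFdef, Set.Finite.mem_toFinset] at hsF
      refine ⟨?_, hsi⟩
      have : s = (i, s.2) := by
        rw [← hsi]
      rwa [this] at hsF
    have hptwise : ∀ s ∈ G, δ ≤ f s ∧ |f s - 1| ≤ A s := by
      intro s hs
      obtain ⟨hsS, hsi⟩ := hmemG s hs
      obtain ⟨h1, h2, h3⟩ := hbox i s.2 hsS
      have hbe := box_est hq ht hsub h1 h2 h3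
      have hfs : f s = bbox q t μ (i, s.2) / bbox q t ν (i, s.2) := by
        rw [hfdef]
        have : s = (i, s.2) := by rw [← hsi]
        rw [this]
      rw [hfs]
      exact ⟨hbe.1, hbe.2⟩
    have hA0 : ∀ s, 0 ≤ A s := by
      intro s
      rw [hAdef]
      positivity
    have hsum : (∑ s ∈ G, A s) ≤ M := by
      have hGsub : G ⊆ (Finset.range (μ.part i + 1)).image (fun j => (i, j)) := by
        intro s hs
        obtain ⟨hsS, hsi⟩ := hmemG s hs
        obtain ⟨_, _, h3⟩ := hbox i s.2 hsS
        rw [Finset.mem_image]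
        exact ⟨s.2, Finset.mem_range.mpr (by omega), by rw [← hsi]⟩
      calc (∑ s ∈ G, A s) ≤ ∑ s ∈ (Finset.range (μ.part i + 1)).image (fun j => (i, j)), A s :=
            Finset.sum_le_sum_of_subset_of_nonneg hGsub (fun s _ _ => hA0 s)
        _ = ∑ j ∈ Finset.range (μ.part i + 1), K * |q| ^ (μ.part i - 1 - j) := by
            rw [Finset.sum_image (by intro a _ b _ hab; simpa using hab)]
        _ = K * ∑ j ∈ Finset.range (μ.part i + 1), |q| ^ (μ.part i - 1 - j) := by
            rw [Finset.mul_sum]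
        _ ≤ K * (1 + (1 - |q|)⁻¹) := by
            apply mul_le_mul_of_nonneg_left _ hK0
            rw [Finset.sum_range_succ]
            have hrefl : (∑ j ∈ Finset.range (μ.part i), |q| ^ (μ.part i - 1 - j)) =
                ∑ j ∈ Finset.range (μ.part i), |q| ^ j :=
              Finset.sum_range_reflect (fun j => |q| ^ j) (μ.part i)
            have hz : μ.part i - 1 - μ.part i = 0 := by omega
            rw [hrefl, hz, pow_zero]
            have := geom_bound (abs_nonneg q) hq (μ.part i)
            linarith
        _ = M := hMdef.symm
    have hub : ∀ s ∈ G, f s ≤ Real.exp (A s) := by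
      intro s hs
      exact (exp_bounds hδ0 hδ1 (hptwise s hs).1 (hptwise s hs).2 hc2 hclog).2
    have hlb : ∀ s ∈ G, Real.exp (-(c * A s)) ≤ f s := by
      intro s hs
      exact (exp_bounds hδ0 hδ1 (hptwise s hs).1 (hptwise s hs).2 hc2 hclog).1
    have hf0 : ∀ s ∈ G, 0 ≤ f s := fun s hs => le_trans hδ0.le (hptwise s hs).1
    constructor
    · calc Real.exp (-(c * M)) ≤ Real.exp (-(c * ∑ s ∈ G, A s)) := by
            apply Real.exp_le_exp.mpr
            have : c * (∑ s ∈ G, A s) ≤ c * M :=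
              mul_le_mul_of_nonneg_left hsum (by linarith)
            linarith
        _ = ∏ s ∈ G, Real.exp (-(c * A s)) := by
            rw [← Real.exp_sum]
            congr 1
            rw [Finset.mul_sum, ← Finset.sum_neg_distrib]
        _ ≤ ∏ s ∈ G, f s :=
            Finset.prod_le_prod (fun s _ => (Real.exp_pos _).le) hlb
    · calc (∏ s ∈ G, f s) ≤ ∏ s ∈ G, Real.exp (A s) := Finset.prod_le_prod hf0 hub
        _ = Real.exp (∑ s ∈ G, A s) := (Real.exp_sum _ _).symm
        _ ≤ Real.exp (c * M) := by
            apply Real.exp_le_exp.mpr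
            nlinarith [Finset.sum_nonneg (fun s (_ : s ∈ G) => hA0 s)]
  -- combine rows
  have hP0 : ∀ i ∈ rows, 0 ≤ (∏ s ∈ F.filter (fun s => s.1 = i), f s) :=
    fun i hi => le_trans (Real.exp_pos _).le (hrow i hi).1
  have hupper : (∏ s ∈ F, f s) ≤ Real.exp (c * M) ^ rows.card := by
    rw [hfib]
    calc (∏ i ∈ rows, ∏ s ∈ F.filter (fun s => s.1 = i), f s) ≤
          ∏ _i ∈ rows, Real.exp (c * M) :=
          Finset.prod_le_prod hP0 (fun i hi => (hrow i hi).2)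
      _ = Real.exp (c * M) ^ rows.card := Finset.prod_const _
  have hlower : Real.exp (-(c * M)) ^ rows.card ≤ ∏ s ∈ F, f s := by
    rw [hfib]
    calc Real.exp (-(c * M)) ^ rows.card = ∏ _i ∈ rows, Real.exp (-(c * M)) :=
          (Finset.prod_const _).symm
      _ ≤ ∏ i ∈ rows, ∏ s ∈ F.filter (fun s => s.1 = i), f s :=
          Finset.prod_le_prod (fun _ _ => (Real.exp_pos _).le) (fun i hi => (hrow i hi).1)
  rw [hSF]
  constructor
  · have h1 : CC q t ^ (-(k : ℤ)) = (CC q t)⁻¹ ^ k := by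
      rw [zpow_neg, zpow_natCast, ← inv_pow]
    rw [h1]
    have h2 : (CC q t)⁻¹ ^ k < Real.exp (-(c * M)) ^ k := by
      apply pow_lt_pow_left₀ _ (by positivity) (by omega)
      rw [Real.exp_neg]
      apply inv_strictAnti₀ (Real.exp_pos _)
      rw [hCC]; linarith
    have h3 : Real.exp (-(c * M)) ^ k ≤ Real.exp (-(c * M)) ^ rows.card := by
      apply pow_le_pow_of_le_one (Real.exp_pos _).le _ hcard
      rw [← Real.exp_zero]
      exact Real.exp_le_exp.mpr (by linarith)
    linarith
  · have h1 : CC q t ^ (k : ℤ) = CC q t ^ k := zpow_natCast _ _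
    rw [h1]
    have h2 : Real.exp (c * M) ^ rows.card ≤ Real.exp (c * M) ^ k :=
      pow_le_pow_right₀ hexp1 hcard
    have h3 : Real.exp (c * M) ^ k < CC q t ^ k := by
      apply pow_lt_pow_left₀ _ (Real.exp_pos _).le (by omega)
      rw [hCC]; linarith
    linarith

end PsiPhiAux

/-- Uniform bounds on the Pieri coefficients `ψ_{λ/μ}` and `φ'_{λ/μ}` in terms of the
number of rows met by the relevant box sets. -/
theorem psi_phi_bounds (q t : ℝ) (hq : |q| < 1) (ht : |t| < 1) :
    ∃ C : ℝ, 1 < C ∧ ∀ k : ℕ, 1 ≤ k →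
      (∀ μ ν : Partn, HStrip μ ν →
          ({i : ℕ | ∃ j : ℕ, (i, j) ∈ RSet ν μ \ CSet ν μ}).ncard ≤ k →
          C ^ (-(k : ℤ)) < psiCoeff q t ν μ ∧ psiCoeff q t ν μ < C ^ (k : ℤ)) ∧
      (∀ μ ν : Partn, VStrip μ ν →
          ({i : ℕ | ∃ j : ℕ, (i, j) ∈ RSet ν μ}).ncard ≤ k →
          C ^ (-(k : ℤ)) < phiPrimeCoeff q t ν μ ∧ phiPrimeCoeff q t ν μ < C ^ (k : ℤ)) := by
  refine ⟨PsiPhiAux.CC q t, ?_, ?_⟩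
  · have := Real.exp_pos (max 2 (2 * Real.log ((1 - max |q| |t|) ^ 2 /
      (1 + max |q| |t|) ^ 2)⁻¹) * (6 / (1 - max |q| |t|) ^ 2 * (1 + (1 - |q|)⁻¹)))
    unfold PsiPhiAux.CC
    linarith
  · intro k hk
    constructor
    · intro μ ν hstrip hcard
      have hsub := hstrip.1
      have hfin : (RSet ν μ \ CSet ν μ).Finite :=
        (PsiPhiAux.RSet_finite ν μ).subset Set.diff_subset
      have hbox : ∀ i j : ℕ, (i, j) ∈ RSet ν μ \ CSet ν μ →
          j < ν.part i ∧ μ.part i < ν.part i ∧ j ≤ μ.part i := by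
        rintro i j ⟨hR, hnC⟩
        have h1 : j < ν.part i := hR.1
        have h2 : μ.part i < ν.part i := hR.2
        refine ⟨h1, h2, ?_⟩
        by_contra hcon
        push_neg at hcon
        exact hnC ⟨h1, PsiPhiAux.conj_lt hsub (by omega) h1⟩
      exact PsiPhiAux.prod_rows_bound hq ht hsub _ hfin k hk hbox hcard
    · intro μ ν hstrip hcard
      have hsub := hstrip.1
      have hbox : ∀ i j : ℕ, (i, j) ∈ RSet ν μ →
          j < ν.part i ∧ μ.part i < ν.part i ∧ j ≤ μ.part i := by
        rintro i j hR
        have h1 : j < ν.part i := hR.1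
        have h2 : μ.part i < ν.part i := hR.2
        have h3 := hstrip.2 i
        exact ⟨h1, h2, by omega⟩
      exact PsiPhiAux.prod_rows_bound hq ht hsub _ (PsiPhiAux.RSet_finite ν μ) k hk hbox hcard
end
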